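/- arXiv:1412.5805 — 6 statements merged into one kernel-verified Lean document; each statement's English description precedes it below -/
import Mathlib

section
/- Let A ⊆ B be subcomplexes of Δ_n^{(r)} such that for every external face σ of B of dimension at most r, every proper nonempty subset of σ is a face of A. Then the sum of P_r(Y) over all subcomplexes Y of Δ_n^{(r)} with A ⊆ Y ⊆ B equals ∏_{i=0}^r p_i^{f_i(A)} · ∏_{i=0}^r q_i^{e_i(B)}. -/
open Finset Filter

/-- A subcomplex of the `r`-skeleton of the simplex on vertex set `Fin n`:
a collection of nonempty faces of cardinality at most `r+1`, closed under
passing to nonempty subsets. -/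
def IsComplex (n r : ℕ) (Y : Finset (Finset (Fin n))) : Prop :=
  (∀ σ ∈ Y, σ.Nonempty ∧ σ.card ≤ r + 1) ∧
    ∀ σ ∈ Y, ∀ τ ⊆ σ, τ.Nonempty → τ ∈ Y

/-- `fCount Y i` = number of faces of `Y` of cardinality `i+1` (i.e. of dimension `i`). -/
def fCount {n : ℕ} (Y : Finset (Finset (Fin n))) (i : ℕ) : ℕ :=
  (Y.filter fun σ => σ.card = i + 1).card

/-- `eCount Y i` = number of external `i`-faces of `Y`: sets `σ` of cardinality `i+1`
that are not faces of `Y` but all of whose (nonempty) `i`-element subsets are faces of `Y`. -/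
def eCount {n : ℕ} (Y : Finset (Finset (Fin n))) (i : ℕ) : ℕ :=
  ((univ : Finset (Finset (Fin n))).filter fun σ =>
    σ.card = i + 1 ∧ σ ∉ Y ∧ ∀ τ ⊆ σ, τ.card = i → τ.Nonempty → τ ∈ Y).card

/-- The weight `P_r(Y) = ∏_{i=0}^r p_i^{f_i(Y)} (1-p_i)^{e_i(Y)}`. -/
noncomputable def weight (n r : ℕ) (p : ℕ → ℝ) (Y : Finset (Finset (Fin n))) : ℝ :=
  ∏ i ∈ Finset.range (r + 1), p i ^ fCount Y i * (1 - p i) ^ eCount Y i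

open scoped Classical in
/-- The finite set of all subcomplexes of `Δ_n^{(r)}`. -/
noncomputable def complexes (n r : ℕ) : Finset (Finset (Finset (Fin n))) :=
  (univ : Finset (Finset (Finset (Fin n)))).filter (IsComplex n r)

/-- A finite abstract simplicial complex on a vertex type `V`. -/
def IsSimpComplex {V : Type*} [DecidableEq V] (S : Finset (Finset V)) : Prop :=
  S.Nonempty ∧ (∀ σ ∈ S, σ.Nonempty) ∧ ∀ σ ∈ S, ∀ τ ⊆ σ, τ.Nonempty → τ ∈ S

/-- `fS S i` = number of faces of `S` of cardinality `i+1`. -/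
def fS {V : Type*} [DecidableEq V] (S : Finset (Finset V)) (i : ℕ) : ℕ :=
  (S.filter fun σ => σ.card = i + 1).card

/-- The degree of a face `σ` in `S`: the number of faces of one higher dimension containing it. -/
def degFace {V : Type*} [DecidableEq V] (S : Finset (Finset V)) (σ : Finset V) : ℕ :=
  (S.filter fun τ => τ.card = σ.card + 1 ∧ σ ⊆ τ).card

open scoped Classical in
lemma key_base (n r : ℕ) (p : ℕ → ℝ) (A : Finset (Finset (Fin n))) (hA : IsComplex n r A) :
    ∑ Y ∈ (complexes n r).filter (fun Y => A ⊆ Y ∧ Y ⊆ A), weight n r p Y =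
      (∏ i ∈ Finset.range (r + 1), p i ^ fCount A i) *
        ∏ i ∈ Finset.range (r + 1), (1 - p i) ^ eCount A i := by
  have hfilter : (complexes n r).filter (fun Y => A ⊆ Y ∧ Y ⊆ A) = {A} := by
    ext Y
    simp only [mem_filter, mem_singleton, complexes, mem_univ, true_and]
    constructor
    · rintro ⟨-, h1, h2⟩; exact subset_antisymm h2 h1
    · rintro rfl; exact ⟨hA, subset_rfl, subset_rfl⟩
  rw [hfilter, sum_singleton, weight, Finset.prod_mul_distrib]

open scoped Classical in
lemma key (n r : ℕ) (p : ℕ → ℝ) :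
    ∀ k : ℕ, ∀ A B : Finset (Finset (Fin n)), (B \ A).card ≤ k →
      IsComplex n r A → IsComplex n r B → A ⊆ B →
      (∀ σ : Finset (Fin n), σ.Nonempty → σ.card ≤ r + 1 → σ ∉ B →
        (∀ τ ⊆ σ, τ.card = σ.card - 1 → τ.Nonempty → τ ∈ B) →
        ∀ τ ⊂ σ, τ.Nonempty → τ ∈ A) →
      ∑ Y ∈ (complexes n r).filter (fun Y => A ⊆ Y ∧ Y ⊆ B), weight n r p Y =
        (∏ i ∈ Finset.range (r + 1), p i ^ fCount A i) *
          ∏ i ∈ Finset.range (r + 1), (1 - p i) ^ eCount B i := by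
  intro k
  induction k with
  | zero =>
    intro A B hcard hA hB hAB hext
    have hBA : A = B := subset_antisymm hAB
      (sdiff_eq_empty_iff_subset.mp (card_eq_zero.mp (Nat.le_zero.mp hcard)))
    subst hBA
    exact key_base n r p A hA
  | succ k ih =>
    intro A B hcard hA hB hAB hext
    by_cases hBA : B \ A = ∅
    · have hBA' : A = B := subset_antisymm hAB (sdiff_eq_empty_iff_subset.mp hBA)
      subst hBA'
      exact key_base n r p A hA
    · obtain ⟨σ, hσmem, hσmin⟩ :=
        Finset.exists_min_image (B \ A) Finset.card (nonempty_of_ne_empty hBA)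
      obtain ⟨hσB, hσA⟩ := mem_sdiff.mp hσmem
      obtain ⟨hσne, hσcard⟩ := hB.1 σ hσB
      have hc1 : 1 ≤ σ.card := hσne.card_pos
      have hmin : ∀ τ ⊂ σ, τ.Nonempty → τ ∈ A := by
        intro τ hτ hτne
        by_contra h
        have hτB : τ ∈ B := hB.2 σ hσB τ hτ.subset hτne
        exact absurd (card_lt_card hτ) (not_lt.mpr (hσmin τ (mem_sdiff.mpr ⟨hτB, h⟩)))
      set A' := insert σ A with hA'def
      set B' := B.filter (fun τ => ¬ σ ⊆ τ) with hB'def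
      have hB'B : B' ⊆ B := filter_subset _ _
      have hσB' : σ ∉ B' := fun h => ((mem_filter.mp h).2) subset_rfl
      have hA'c : IsComplex n r A' := by
        constructor
        · intro τ hτ
          rcases mem_insert.mp hτ with rfl | hτ
          · exact ⟨hσne, hσcard⟩
          · exact hA.1 τ hτ
        · intro τ hτ ρ hρ hρne
          rcases mem_insert.mp hτ with rfl | hτ
          · rcases eq_or_ne ρ τ with rfl | hne
            · exact mem_insert_self _ _
            · exact mem_insert_of_mem (hmin ρ (ssubset_of_subset_of_ne hρ hne) hρne)
          · exact mem_insert_of_mem (hA.2 τ hτ ρ hρ hρne)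
      have hB'c : IsComplex n r B' := by
        constructor
        · intro τ hτ; exact hB.1 τ (hB'B hτ)
        · intro τ hτ ρ hρ hρne
          rw [hB'def, mem_filter] at hτ ⊢
          exact ⟨hB.2 τ hτ.1 ρ hρ hρne, fun h => hτ.2 (h.trans hρ)⟩
      have hA'B : A' ⊆ B := insert_subset hσB hAB
      have hAB' : A ⊆ B' := by
        intro a ha
        rw [hB'def, mem_filter]
        exact ⟨hAB ha, fun h => hσA (hA.2 a ha σ h hσne)⟩
      have hnotB : ∀ τ : Finset (Fin n), τ ≠ σ → τ ∉ B' →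
          (∀ ρ ⊆ τ, ρ.card = τ.card - 1 → ρ.Nonempty → ρ ∈ B') → τ ∉ B := by
        intro τ hne hτB' hsub hτB
        have hστ : σ ⊆ τ := by
          by_contra h
          exact hτB' (mem_filter.mpr ⟨hτB, h⟩)
        obtain ⟨x, hxτ, hxσ⟩ := exists_of_ssubset (ssubset_of_subset_of_ne hστ (Ne.symm hne))
        have hρ : σ ⊆ τ.erase x := subset_erase.mpr ⟨hστ, hxσ⟩
        have hmem : τ.erase x ∈ B' :=
          hsub _ (erase_subset _ _) (card_erase_of_mem hxτ) (hσne.mono hρ)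
        exact (mem_filter.mp hmem).2 hρ
      have hextA'B : ∀ τ : Finset (Fin n), τ.Nonempty → τ.card ≤ r + 1 → τ ∉ B →
          (∀ ρ ⊆ τ, ρ.card = τ.card - 1 → ρ.Nonempty → ρ ∈ B) →
          ∀ ρ ⊂ τ, ρ.Nonempty → ρ ∈ A' :=
        fun τ h1 h2 h3 h4 ρ h5 h6 => mem_insert_of_mem (hext τ h1 h2 h3 h4 ρ h5 h6)
      have hextAB' : ∀ τ : Finset (Fin n), τ.Nonempty → τ.card ≤ r + 1 → τ ∉ B' →
          (∀ ρ ⊆ τ, ρ.card = τ.card - 1 → ρ.Nonempty → ρ ∈ B') →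
          ∀ ρ ⊂ τ, ρ.Nonempty → ρ ∈ A := by
        intro τ h1 h2 h3 h4
        rcases eq_or_ne τ σ with rfl | hne
        · exact hmin
        · exact hext τ h1 h2 (hnotB τ hne h3 h4) (fun ρ a b c => hB'B (h4 ρ a b c))
      -- external face sets
      have hE : ∀ i, i ≤ r →
          ((univ : Finset (Finset (Fin n))).filter fun τ =>
            τ.card = i + 1 ∧ τ ∉ B' ∧ ∀ ρ ⊆ τ, ρ.card = i → ρ.Nonempty → ρ ∈ B')
          = (if σ.card = i + 1 then {σ} else ∅) ∪
            ((univ : Finset (Finset (Fin n))).filter fun τ =>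
              τ.card = i + 1 ∧ τ ∉ B ∧ ∀ ρ ⊆ τ, ρ.card = i → ρ.Nonempty → ρ ∈ B) := by
        intro i hi
        ext τ
        simp only [mem_union, mem_filter, mem_univ, true_and]
        constructor
        · rintro ⟨hcardτ, hτB', hsub⟩
          rcases eq_or_ne τ σ with rfl | hne
          · left; rw [if_pos hcardτ]; exact mem_singleton_self τ
          · right
            have hτB : τ ∉ B := hnotB τ hne hτB'
              (fun ρ h1 h2 h3 => hsub ρ h1 (by omega) h3)
            exact ⟨hcardτ, hτB, fun ρ h1 h2 h3 => hB'B (hsub ρ h1 h2 h3)⟩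
        · rintro (hτ | ⟨hcardτ, hτB, hsub⟩)
          · by_cases hc : σ.card = i + 1
            · rw [if_pos hc, mem_singleton] at hτ
              subst hτ
              refine ⟨hc, hσB', ?_⟩
              intro ρ h1 h2 h3
              have hρτ : ρ ⊂ τ := ssubset_of_subset_of_ne h1 (by intro h; subst h; omega)
              exact hAB' (hmin ρ hρτ h3)
            · rw [if_neg hc] at hτ
              exact absurd hτ (notMem_empty _)
          · refine ⟨hcardτ, fun h => hτB (hB'B h), ?_⟩
            intro ρ h1 h2 h3
            have hτne : τ.Nonempty := card_pos.mp (by omega)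
            have hρτ : ρ ⊂ τ := ssubset_of_subset_of_ne h1 (by intro h; subst h; omega)
            exact hAB' (hext τ hτne (by omega) hτB
              (fun ρ' a b c => hsub ρ' a (by omega) c) ρ hρτ h3)
      have hEcard : ∀ i, i ≤ r →
          eCount B' i = eCount B i + (if σ.card = i + 1 then 1 else 0) := by
        intro i hi
        unfold eCount
        rw [hE i hi, card_union_of_disjoint, add_comm]
        · congr 1
          split_ifs <;> simp
        · split_ifs with hc
          · rw [disjoint_left]
            intro τ h1 h2
            rw [mem_singleton] at h1
            subst h1
            exact (mem_filter.mp h2).2.2.1 hσB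
          · exact disjoint_empty_left _
      have hfA' : ∀ i, fCount A' i = fCount A i + (if σ.card = i + 1 then 1 else 0) := by
        intro i
        unfold fCount
        rw [hA'def, filter_insert]
        split_ifs with h
        · rw [card_insert_of_notMem]
          intro hmem
          exact hσA (Finset.filter_subset _ _ hmem)
        · omega
      have hprod : ∀ (g : ℕ → ℝ) (c : ℕ → ℕ),
          ∏ i ∈ Finset.range (r + 1), g i ^ (c i + if σ.card = i + 1 then 1 else 0)
            = (∏ i ∈ Finset.range (r + 1), g i ^ c i) * g (σ.card - 1) := by
        intro g c
        simp only [pow_add]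
        rw [Finset.prod_mul_distrib]
        congr 1
        rw [Finset.prod_eq_single (σ.card - 1)]
        · rw [if_pos (by omega), pow_one]
        · intro i hi hne
          rw [if_neg (by omega), pow_zero]
        · intro h
          exact absurd (Finset.mem_range.mpr (by omega)) h
      have hcard1 : (B \ A').card ≤ k := by
        have heq : B \ A' = (B \ A).erase σ := by
          rw [hA'def]
          ext τ
          simp only [Finset.mem_sdiff, mem_erase, mem_insert, not_or]
          tauto
        rw [heq, card_erase_of_mem hσmem]
        omega
      have hcard2 : (B' \ A).card ≤ k := by
        have hsub : B' \ A ⊆ (B \ A).erase σ := by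
          intro τ hτ
          rw [Finset.mem_sdiff] at hτ
          exact mem_erase.mpr ⟨fun h => hσB' (h ▸ hτ.1), Finset.mem_sdiff.mpr ⟨hB'B hτ.1, hτ.2⟩⟩
        have := card_le_card hsub
        rw [card_erase_of_mem hσmem] at this
        omega
      have hsum := Finset.sum_filter_add_sum_filter_not
        ((complexes n r).filter (fun Y => A ⊆ Y ∧ Y ⊆ B)) (fun Y => σ ∈ Y) (weight n r p)
      have hS1 : ((complexes n r).filter (fun Y => A ⊆ Y ∧ Y ⊆ B)).filter (fun Y => σ ∈ Y)
          = (complexes n r).filter (fun Y => A' ⊆ Y ∧ Y ⊆ B) := by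
        rw [filter_filter]
        apply filter_congr
        intro Y hY
        simp only [hA'def, insert_subset_iff]
        tauto
      have hS2 : ((complexes n r).filter (fun Y => A ⊆ Y ∧ Y ⊆ B)).filter (fun Y => σ ∉ Y)
          = (complexes n r).filter (fun Y => A ⊆ Y ∧ Y ⊆ B') := by
        rw [filter_filter]
        apply filter_congr
        intro Y hY
        have hYc : IsComplex n r Y := by
          simp only [complexes, mem_filter, mem_univ, true_and] at hY
          exact hY
        constructor
        · rintro ⟨⟨h1, h2⟩, h3⟩
          exact ⟨h1, fun τ hτ => mem_filter.mpr ⟨h2 hτ, fun hc => h3 (hYc.2 τ hτ σ hc hσne)⟩⟩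
        · rintro ⟨h1, h2⟩
          exact ⟨⟨h1, h2.trans hB'B⟩, fun h => hσB' (h2 h)⟩
      rw [← hsum, hS1, hS2,
        ih A' B hcard1 hA'c hB hA'B hextA'B,
        ih A B' hcard2 hA hB'c hAB' hextAB']
      have e1 : ∏ i ∈ Finset.range (r + 1), p i ^ fCount A' i
          = (∏ i ∈ Finset.range (r + 1), p i ^ fCount A i) * p (σ.card - 1) := by
        simp only [hfA']
        exact hprod p (fCount A)
      have e2 : ∏ i ∈ Finset.range (r + 1), (1 - p i) ^ eCount B' i
          = (∏ i ∈ Finset.range (r + 1), (1 - p i) ^ eCount B i) * (1 - p (σ.card - 1)) := by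
        rw [Finset.prod_congr rfl (fun i hi => by
          rw [hEcard i (Nat.lt_succ_iff.mp (Finset.mem_range.mp hi))])]
        exact hprod (fun i => 1 - p i) (eCount B)
      rw [e1, e2]
      ring

open scoped Classical in
/-- Lemma 2.3 (two-sided containment probability). -/
theorem stmt0 (n r : ℕ) (hn : 1 ≤ n) (p : ℕ → ℝ)
    (hp : ∀ i, i ≤ r → 0 ≤ p i ∧ p i ≤ 1)
    (A B : Finset (Finset (Fin n)))
    (hA : IsComplex n r A) (hB : IsComplex n r B) (hAB : A ⊆ B)
    (hext : ∀ σ : Finset (Fin n), σ.Nonempty → σ.card ≤ r + 1 → σ ∉ B →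
      (∀ τ ⊆ σ, τ.card = σ.card - 1 → τ.Nonempty → τ ∈ B) →
      ∀ τ ⊂ σ, τ.Nonempty → τ ∈ A) :
    ∑ Y ∈ (complexes n r).filter (fun Y => A ⊆ Y ∧ Y ⊆ B), weight n r p Y =
      (∏ i ∈ Finset.range (r + 1), p i ^ fCount A i) *
        ∏ i ∈ Finset.range (r + 1), (1 - p i) ^ eCount B i := by
  exact key n r p (B \ A).card A B le_rfl hA hB hAB hext
end

section
/- For any fixed subcomplex A of Δ_n^{(r)}, the probability that a random complex contains A equals the product of the face probabilities of A; that is, the sum of P_r(Y) over all subcomplexes Y of Δ_n^{(r)} with A ⊆ Y equals ∏_{i=0}^r p_i^{f_i(A)}. -/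
open Finset Filter

section Aux

open scoped Classical

/-- Binomial identity over powersets. -/
lemma sum_powerset_binom {α : Type*} [DecidableEq α] (U : Finset α) (p : ℝ) :
    ∑ T ∈ U.powerset, p ^ T.card * (1 - p) ^ (U.card - T.card) = 1 := by
  calc ∑ T ∈ U.powerset, p ^ T.card * (1 - p) ^ (U.card - T.card)
      = ∑ T ∈ U.powerset, (∏ _x ∈ T, p) * ∏ _x ∈ U \ T, (1 - p) := by
        refine Finset.sum_congr rfl fun T hT => ?_
        rw [Finset.prod_const, Finset.prod_const,
          Finset.card_sdiff_of_subset (Finset.mem_powerset.mp hT)]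
    _ = ∏ _x ∈ U, (p + (1 - p)) := (Finset.prod_add _ _ _).symm
    _ = 1 := by simp

lemma sum_powerset_binom' {α : Type*} [DecidableEq α] (U F : Finset α) (hF : F ⊆ U) (p : ℝ) :
    ∑ T ∈ U.powerset.filter (fun T => F ⊆ T),
        p ^ T.card * (1 - p) ^ (U.card - T.card) = p ^ F.card := by
  have key : ∑ T ∈ U.powerset.filter (fun T => F ⊆ T),
        p ^ T.card * (1 - p) ^ (U.card - T.card)
      = ∑ T' ∈ (U \ F).powerset,
          p ^ (F.card + T'.card) * (1 - p) ^ ((U \ F).card - T'.card) := by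
    refine Finset.sum_nbij' (fun T => T \ F) (fun T' => T' ∪ F) ?_ ?_ ?_ ?_ ?_
    · intro T hT
      simp only [Finset.mem_filter, Finset.mem_powerset] at hT
      exact Finset.mem_powerset.mpr (Finset.sdiff_subset_sdiff hT.1 (le_refl F))
    · intro T' hT'
      simp only [Finset.mem_powerset] at hT'
      simp only [Finset.mem_filter, Finset.mem_powerset]
      exact ⟨Finset.union_subset (hT'.trans (Finset.sdiff_subset)) hF, Finset.subset_union_right⟩
    · intro T hT
      simp only [Finset.mem_filter, Finset.mem_powerset] at hT
      exact Finset.sdiff_union_of_subset hT.2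
    · intro T' hT'
      simp only [Finset.mem_powerset] at hT'
      have hd : Disjoint T' F := (Finset.sdiff_disjoint).mono_left hT'
      show (T' ∪ F) \ F = T'
      rw [Finset.union_sdiff_cancel_right hd]
    · intro T hT
      simp only [Finset.mem_filter, Finset.mem_powerset] at hT
      have h1 : T.card = F.card + (T \ F).card := by
        have := Finset.card_sdiff_add_card_eq_card hT.2
        omega
      have h2 : U.card - T.card = (U \ F).card - (T \ F).card := by
        have hU := Finset.card_sdiff_add_card_eq_card hF
        have hT2 := Finset.card_sdiff_add_card_eq_card hT.2
        have hle : T.card ≤ U.card := Finset.card_le_card hT.1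
        omega
      show p ^ T.card * (1 - p) ^ (U.card - T.card)
          = p ^ (F.card + (T \ F).card) * (1 - p) ^ ((U \ F).card - (T \ F).card)
      rw [← h1, ← h2]
  rw [key]
  simp_rw [pow_add, mul_assoc]
  rw [← Finset.mul_sum, sum_powerset_binom, mul_one]

/-- The `r`-skeleton of a set of faces. -/
noncomputable def skel (n r : ℕ) (Y : Finset (Finset (Fin n))) : Finset (Finset (Fin n)) :=
  Y.filter (fun σ => σ.card ≤ r + 1)

/-- The top-dimensional faces. -/
noncomputable def tops (n r : ℕ) (Y : Finset (Finset (Fin n))) : Finset (Finset (Fin n)) :=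
  Y.filter (fun σ => σ.card = r + 2)

/-- Potential top faces of an `r`-complex. -/
noncomputable def pot (n r : ℕ) (Y : Finset (Finset (Fin n))) : Finset (Finset (Fin n)) :=
  (Finset.univ : Finset (Finset (Fin n))).filter
    (fun σ => σ.card = r + 2 ∧ ∀ τ ⊆ σ, τ.card = r + 1 → τ ∈ Y)

lemma skel_isComplex {n r : ℕ} {Y : Finset (Finset (Fin n))} (hY : IsComplex n (r + 1) Y) :
    IsComplex n r (skel n r Y) := by
  constructor
  · intro σ hσ
    simp only [skel, Finset.mem_filter] at hσ
    exact ⟨(hY.1 σ hσ.1).1, hσ.2⟩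
  · intro σ hσ τ hτσ hτ
    simp only [skel, Finset.mem_filter] at hσ ⊢
    exact ⟨hY.2 σ hσ.1 τ hτσ hτ, le_trans (Finset.card_le_card hτσ) hσ.2⟩

lemma skel_subset {n r : ℕ} {A Y : Finset (Finset (Fin n))} (h : A ⊆ Y) :
    skel n r A ⊆ skel n r Y := Finset.filter_subset_filter _ h

lemma fCount_skel {n r i : ℕ} (Y : Finset (Finset (Fin n))) (hi : i ≤ r) :
    fCount (skel n r Y) i = fCount Y i := by
  unfold fCount skel
  rw [Finset.filter_filter]
  congr 1
  apply Finset.filter_congr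
  intro σ _
  constructor
  · rintro ⟨_, h⟩; exact h
  · intro h; exact ⟨by omega, h⟩

lemma mem_skel {n r : ℕ} {Y : Finset (Finset (Fin n))} {σ : Finset (Fin n)} :
    σ ∈ skel n r Y ↔ σ ∈ Y ∧ σ.card ≤ r + 1 := by
  simp [skel]

lemma eCount_skel {n r i : ℕ} (Y : Finset (Finset (Fin n))) (hi : i ≤ r) :
    eCount (skel n r Y) i = eCount Y i := by
  unfold eCount
  congr 1
  apply Finset.filter_congr
  intro σ _
  constructor
  · rintro ⟨h1, h2, h3⟩
    refine ⟨h1, fun hσ => h2 (mem_skel.mpr ⟨hσ, by omega⟩), fun τ hτσ hτc hτne => ?_⟩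
    exact (mem_skel.mp (h3 τ hτσ hτc hτne)).1
  · rintro ⟨h1, h2, h3⟩
    refine ⟨h1, fun hσ => h2 (mem_skel.mp hσ).1, fun τ hτσ hτc hτne => ?_⟩
    exact mem_skel.mpr ⟨h3 τ hτσ hτc hτne, by omega⟩

lemma tops_subset_pot {n r : ℕ} {Y : Finset (Finset (Fin n))} (hY : IsComplex n (r + 1) Y) :
    tops n r Y ⊆ pot n r (skel n r Y) := by
  intro σ hσ
  simp only [tops, Finset.mem_filter] at hσ
  simp only [pot, Finset.mem_filter, Finset.mem_univ, true_and]
  refine ⟨hσ.2, fun τ hτσ hτc => ?_⟩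
  have hτne : τ.Nonempty := Finset.card_pos.mp (by omega)
  exact mem_skel.mpr ⟨hY.2 σ hσ.1 τ hτσ hτne, by omega⟩

lemma fCount_top {n r : ℕ} (Y : Finset (Finset (Fin n))) :
    fCount Y (r + 1) = (tops n r Y).card := rfl

lemma eCount_top {n r : ℕ} (Y : Finset (Finset (Fin n))) :
    eCount Y (r + 1) = (pot n r (skel n r Y) \ tops n r Y).card := by
  unfold eCount
  congr 1
  ext σ
  simp only [Finset.mem_filter, Finset.mem_univ, true_and, Finset.mem_sdiff, pot, tops,
    not_and]
  constructor
  · rintro ⟨h1, h2, h3⟩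
    refine ⟨⟨h1, fun τ hτσ hτc => ?_⟩, fun h _ => h2 h⟩
    have hτne : τ.Nonempty := Finset.card_pos.mp (by omega)
    exact mem_skel.mpr ⟨h3 τ hτσ hτc hτne, by omega⟩
  · rintro ⟨⟨h1, h2⟩, h3⟩
    refine ⟨h1, fun hσ => h3 hσ h1, fun τ hτσ hτc _ => ?_⟩
    exact (mem_skel.mp (h2 τ hτσ hτc)).1

lemma weight_decomp {n r : ℕ} (p : ℕ → ℝ) {Y : Finset (Finset (Fin n))}
    (hY : IsComplex n (r + 1) Y) :
    weight n (r + 1) p Y = weight n r p (skel n r Y) *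
      (p (r + 1) ^ (tops n r Y).card *
        (1 - p (r + 1)) ^ ((pot n r (skel n r Y)).card - (tops n r Y).card)) := by
  unfold weight
  rw [Finset.prod_range_succ]
  congr 1
  · refine Finset.prod_congr rfl fun i hi => ?_
    have hi' : i ≤ r := by simpa using Nat.lt_succ_iff.mp (Finset.mem_range.mp hi)
    rw [fCount_skel Y hi', eCount_skel Y hi']
  · rw [fCount_top, eCount_top,
      Finset.card_sdiff_of_subset (tops_subset_pot hY)]

lemma mem_pot {n r : ℕ} {Y' : Finset (Finset (Fin n))} {σ : Finset (Fin n)} :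
    σ ∈ pot n r Y' ↔ σ.card = r + 2 ∧ ∀ τ ⊆ σ, τ.card = r + 1 → τ ∈ Y' := by
  simp [pot]

lemma skel_union {n r : ℕ} {Y' T : Finset (Finset (Fin n))} (hY' : IsComplex n r Y')
    (hT : T ⊆ pot n r Y') : skel n r (Y' ∪ T) = Y' := by
  ext σ
  simp only [skel, Finset.mem_filter, Finset.mem_union]
  constructor
  · rintro ⟨h | h, hc⟩
    · exact h
    · have := (mem_pot.mp (hT h)).1
      omega
  · intro h
    exact ⟨Or.inl h, (hY'.1 σ h).2⟩

lemma tops_union {n r : ℕ} {Y' T : Finset (Finset (Fin n))} (hY' : IsComplex n r Y')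
    (hT : T ⊆ pot n r Y') : tops n r (Y' ∪ T) = T := by
  ext σ
  simp only [tops, Finset.mem_filter, Finset.mem_union]
  constructor
  · rintro ⟨h | h, hc⟩
    · have := (hY'.1 σ h).2; omega
    · exact h
  · intro h
    exact ⟨Or.inr h, (mem_pot.mp (hT h)).1⟩

lemma union_isComplex {n r : ℕ} {Y' T : Finset (Finset (Fin n))} (hY' : IsComplex n r Y')
    (hT : T ⊆ pot n r Y') : IsComplex n (r + 1) (Y' ∪ T) := by
  constructor
  · intro σ hσ
    rcases Finset.mem_union.mp hσ with h | h
    · exact ⟨(hY'.1 σ h).1, by have := (hY'.1 σ h).2; omega⟩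
    · have hc := (mem_pot.mp (hT h)).1
      exact ⟨Finset.card_pos.mp (by omega), by omega⟩
  · intro σ hσ τ hτσ hτ
    rcases Finset.mem_union.mp hσ with h | h
    · exact Finset.mem_union_left _ (hY'.2 σ h τ hτσ hτ)
    · obtain ⟨hσc, hσall⟩ := mem_pot.mp (hT h)
      by_cases hc : τ.card = r + 2
      · have : τ = σ := Finset.eq_of_subset_of_card_le hτσ (by omega)
        subst this; exact Finset.mem_union_right _ h
      · have hle : τ.card ≤ r + 1 := by
          have := Finset.card_le_card hτσ; omega
        obtain ⟨u, hτu, huσ, huc⟩ :=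
          Finset.exists_subsuperset_card_eq (n := r + 1) hτσ (by omega) (by omega)
        have hu : u ∈ Y' := hσall u huσ huc
        exact Finset.mem_union_left _ (hY'.2 u hu τ hτu hτ)

end Aux

section Aux2
open scoped Classical

lemma skel_union_tops {n r : ℕ} {Y : Finset (Finset (Fin n))} (hY : IsComplex n (r + 1) Y) :
    skel n r Y ∪ tops n r Y = Y := by
  ext σ
  simp only [Finset.mem_union, skel, tops, Finset.mem_filter]
  constructor
  · rintro (⟨h, _⟩ | ⟨h, _⟩) <;> exact h
  · intro h
    have h2 := (hY.1 σ h).2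
    rcases Nat.lt_or_ge σ.card (r + 2) with h' | h'
    · exact Or.inl ⟨h, by omega⟩
    · exact Or.inr ⟨h, by omega⟩

lemma topsA_subset_pot {n r : ℕ} {A Y' : Finset (Finset (Fin n))}
    (hA : IsComplex n (r + 1) A) (hAY : skel n r A ⊆ Y') :
    tops n r A ⊆ pot n r Y' := by
  intro σ hσ
  simp only [tops, Finset.mem_filter] at hσ
  simp only [pot, Finset.mem_filter, Finset.mem_univ, true_and]
  refine ⟨hσ.2, fun τ hτσ hτc => ?_⟩
  have hτne : τ.Nonempty := Finset.card_pos.mp (by omega)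
  exact hAY (mem_skel.mpr ⟨hA.2 σ hσ.1 τ hτσ hτne, by omega⟩)

end Aux2

open scoped Classical in
/-- the probability that a random complex contains a fixed subcomplex `A`. -/
theorem stmt2 (n r : ℕ) (hn : 1 ≤ n) (p : ℕ → ℝ)
    (hp : ∀ i, i ≤ r → 0 ≤ p i ∧ p i ≤ 1)
    (A : Finset (Finset (Fin n))) (hA : IsComplex n r A) :
    ∑ Y ∈ (complexes n r).filter (fun Y => A ⊆ Y), weight n r p Y =
      ∏ i ∈ Finset.range (r + 1), p i ^ fCount A i := by
  classical
  induction r generalizing A with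
  | zero =>
    set S : Finset (Finset (Fin n)) := Finset.univ.filter (fun σ => σ.card = 1) with hS
    have hmem : ∀ Y : Finset (Finset (Fin n)), Y ∈ complexes n 0 ↔ Y ⊆ S := by
      intro Y
      simp only [complexes, Finset.mem_filter, Finset.mem_univ, true_and]
      constructor
      · intro hY σ hσ
        have h1 := hY.1 σ hσ
        simp only [hS, Finset.mem_filter, Finset.mem_univ, true_and]
        have := Finset.card_pos.mpr h1.1
        omega
      · intro hY
        constructor
        · intro σ hσ
          have := Finset.mem_filter.mp (hY hσ)
          exact ⟨Finset.card_pos.mp (by omega), by omega⟩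
        · intro σ hσ τ hτσ hτ
          have hc := (Finset.mem_filter.mp (hY hσ)).2
          have : τ = σ := Finset.eq_of_subset_of_card_le hτσ
            (by have := Finset.card_pos.mpr hτ; omega)
          subst this; exact hσ
    have hAS : A ⊆ S := (hmem A).mp (by
      simp only [complexes, Finset.mem_filter, Finset.mem_univ, true_and]; exact hA)
    have hset : (complexes n 0).filter (fun Y => A ⊆ Y)
        = S.powerset.filter (fun Y => A ⊆ Y) := by
      ext Y
      simp only [Finset.mem_filter, Finset.mem_powerset, hmem]
    have hw : ∀ Y ∈ S.powerset.filter (fun Y => A ⊆ Y),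
        weight n 0 p Y = p 0 ^ Y.card * (1 - p 0) ^ (S.card - Y.card) := by
      intro Y hY
      have hYS : Y ⊆ S := Finset.mem_powerset.mp (Finset.mem_filter.mp hY).1
      have hf : fCount Y 0 = Y.card := by
        unfold fCount
        rw [Finset.filter_true_of_mem]
        intro σ hσ
        exact (Finset.mem_filter.mp (hYS hσ)).2
      have he : eCount Y 0 = S.card - Y.card := by
        unfold eCount
        rw [← Finset.card_sdiff_of_subset hYS]
        congr 1
        ext σ
        rw [Finset.mem_sdiff]
        simp only [Finset.mem_filter, Finset.mem_univ, true_and, hS]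
        constructor
        · rintro ⟨h1, h2, _⟩; exact ⟨h1, h2⟩
        · rintro ⟨h1, h2⟩
          refine ⟨h1, h2, fun τ _ hτc hτne => ?_⟩
          exfalso
          rw [Finset.card_eq_zero] at hτc
          subst hτc
          exact Finset.not_nonempty_empty hτne
      unfold weight
      rw [Finset.prod_range_one, hf, he]
    rw [hset, Finset.sum_congr rfl hw, sum_powerset_binom' S A hAS]
    have hfA : fCount A 0 = A.card := by
      unfold fCount
      rw [Finset.filter_true_of_mem]
      intro σ hσ
      exact (Finset.mem_filter.mp (hAS hσ)).2
    rw [Finset.prod_range_one, hfA]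
  | succ r ih =>
    have hskelA : IsComplex n r (skel n r A) := skel_isComplex hA
    have hpr : ∀ i, i ≤ r → 0 ≤ p i ∧ p i ≤ 1 := fun i hi => hp i (by omega)
    have hbij : ∑ Y ∈ (complexes n (r + 1)).filter (fun Y => A ⊆ Y), weight n (r + 1) p Y
        = ∑ x ∈ (((complexes n r).filter (fun Y' => skel n r A ⊆ Y')).sigma
              (fun Y' => (pot n r Y').powerset.filter (fun T => tops n r A ⊆ T))),
            weight n r p x.1 * (p (r + 1) ^ x.2.card *
              (1 - p (r + 1)) ^ ((pot n r x.1).card - x.2.card)) := by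
      refine Finset.sum_nbij' (fun Y => ⟨skel n r Y, tops n r Y⟩)
        (fun x => x.1 ∪ x.2) ?_ ?_ ?_ ?_ ?_
      · intro Y hY
        simp only [Finset.mem_filter, complexes, Finset.mem_univ, true_and] at hY
        obtain ⟨hYc, hAY⟩ := hY
        simp only [Finset.mem_sigma, Finset.mem_filter, complexes, Finset.mem_univ, true_and,
          Finset.mem_powerset]
        exact ⟨⟨skel_isComplex hYc, skel_subset hAY⟩,
          tops_subset_pot hYc, Finset.filter_subset_filter _ hAY⟩
      · rintro ⟨Y', T⟩ hx
        simp only [Finset.mem_sigma, Finset.mem_filter, complexes, Finset.mem_univ, true_and,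
          Finset.mem_powerset] at hx
        obtain ⟨⟨hY'c, hAY'⟩, hTp, hAT⟩ := hx
        simp only [Finset.mem_filter, complexes, Finset.mem_univ, true_and]
        refine ⟨union_isComplex hY'c hTp, ?_⟩
        calc A = skel n r A ∪ tops n r A := (skel_union_tops hA).symm
          _ ⊆ Y' ∪ T := Finset.union_subset_union hAY' hAT
      · intro Y hY
        simp only [Finset.mem_filter, complexes, Finset.mem_univ, true_and] at hY
        exact skel_union_tops hY.1
      · rintro ⟨Y', T⟩ hx
        simp only [Finset.mem_sigma, Finset.mem_filter, complexes, Finset.mem_univ, true_and,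
          Finset.mem_powerset] at hx
        obtain ⟨⟨hY'c, _⟩, hTp, _⟩ := hx
        have h1 : skel n r (Y' ∪ T) = Y' := skel_union hY'c hTp
        have h2 : tops n r (Y' ∪ T) = T := tops_union hY'c hTp
        show (⟨skel n r (Y' ∪ T), tops n r (Y' ∪ T)⟩ :
          (_ : Finset (Finset (Fin n))) × Finset (Finset (Fin n))) = ⟨Y', T⟩
        rw [h1, h2]
      · intro Y hY
        simp only [Finset.mem_filter, complexes, Finset.mem_univ, true_and] at hY
        exact weight_decomp p hY.1
    rw [hbij, Finset.sum_sigma]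
    have hinner : ∀ Y' ∈ (complexes n r).filter (fun Y' => skel n r A ⊆ Y'),
        (∑ T ∈ (pot n r Y').powerset.filter (fun T => tops n r A ⊆ T),
          weight n r p Y' * (p (r + 1) ^ T.card *
            (1 - p (r + 1)) ^ ((pot n r Y').card - T.card)))
        = weight n r p Y' * p (r + 1) ^ (tops n r A).card := by
      intro Y' hY'
      have hAY' : skel n r A ⊆ Y' := (Finset.mem_filter.mp hY').2
      rw [← Finset.mul_sum _ _ (weight n r p Y'),
        sum_powerset_binom' _ _ (topsA_subset_pot hA hAY') _]
    have hprodskel : ∏ i ∈ Finset.range (r + 1), p i ^ fCount (skel n r A) i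
        = ∏ i ∈ Finset.range (r + 1), p i ^ fCount A i :=
      Finset.prod_congr rfl fun i hi => by
        rw [fCount_skel A (Nat.lt_succ_iff.mp (Finset.mem_range.mp hi))]
    rw [Finset.sum_congr rfl hinner, ← Finset.sum_mul,
      ih hpr (skel n r A) hskelA, hprodskel,
      Finset.prod_range_succ (fun i => p i ^ fCount A i) (r + 1), fCount_top A]
end

section
/- Let S be a fixed finite abstract simplicial complex of dimension at most r, and let α = (α_0,…,α_r) with all α_i ≥ 0 satisfy ∑_{i=0}^r α_i·f_i(S)/f_0(S) > 1. For each n set p_i = n^{−α_i}. Then the P_r-probability that S embeds into the random complex Y ∈ Y_r(n; n^{−α}) tends to 0 as n → ∞. -/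
open Finset Filter

/-! ### Auxiliary machinery -/

lemma sum_prod_interval {β : Type*} [DecidableEq β] (E B X : Finset β) (p : β → ℝ)
    (hB : B ⊆ E) (hX : X ⊆ E) (hBX : Disjoint B X) :
    ∑ ω ∈ E.powerset.filter (fun ω => B ⊆ ω ∧ Disjoint ω X),
      ((∏ σ ∈ ω, p σ) * ∏ σ ∈ E \ ω, (1 - p σ))
      = (∏ σ ∈ B, p σ) * ∏ σ ∈ X, (1 - p σ) := by
  classical
  set U : Finset β := (E \ B) \ X with hU
  have hUB : Disjoint B U := by
    exact Finset.disjoint_left.mpr fun x hx hx2 => by simp [hU] at hx2; exact hx2.1.2 hx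
  have key : ∑ ω ∈ E.powerset.filter (fun ω => B ⊆ ω ∧ Disjoint ω X),
      ((∏ σ ∈ ω, p σ) * ∏ σ ∈ E \ ω, (1 - p σ))
      = ∑ t ∈ U.powerset, ((∏ σ ∈ B ∪ t, p σ) * ∏ σ ∈ E \ (B ∪ t), (1 - p σ)) := by
    apply Finset.sum_nbij' (fun ω => ω \ B) (fun t => B ∪ t)
    · intro ω hω
      simp only [mem_filter, mem_powerset] at hω ⊢
      obtain ⟨h1, h2, h3⟩ := hω
      intro x hx
      simp only [hU, Finset.mem_sdiff] at hx ⊢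
      exact ⟨⟨h1 hx.1, hx.2⟩, Finset.disjoint_left.mp h3 hx.1⟩
    · intro t ht
      simp only [mem_filter, mem_powerset] at ht ⊢
      refine ⟨union_subset hB (ht.trans ?_), subset_union_left, ?_⟩
      · simp only [hU]; exact sdiff_subset.trans sdiff_subset
      · refine Finset.disjoint_left.mpr ?_
        intro x hx hxX
        rcases mem_union.mp hx with h | h
        · exact (Finset.disjoint_left.mp hBX h) hxX
        · have := ht h; simp [hU] at this; exact this.2 hxX
    · intro ω hω
      simp only [mem_filter, mem_powerset] at hω
      exact Finset.union_sdiff_of_subset hω.2.1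
    · intro t ht
      simp only [mem_powerset] at ht
      rw [Finset.union_sdiff_cancel_left (hUB.mono_right ht)]
    · intro ω hω
      simp only [mem_filter, mem_powerset] at hω
      rw [Finset.union_sdiff_of_subset hω.2.1]
  rw [key]
  have hEdecomp : ∀ t ⊆ U, E \ (B ∪ t) = X ∪ (U \ t) := by
    intro t ht
    ext x
    simp only [Finset.mem_sdiff, mem_union, hU, Finset.mem_sdiff] at *
    constructor
    · rintro ⟨hxE, hx⟩
      push_neg at hx
      by_cases hxX : x ∈ X
      · exact Or.inl hxX
      · exact Or.inr ⟨⟨⟨hxE, hx.1⟩, hxX⟩, hx.2⟩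
    · rintro (hxX | ⟨⟨⟨hxE, hxB⟩, _⟩, hxt⟩)
      · refine ⟨hX hxX, ?_⟩
        push_neg
        refine ⟨fun h => (Finset.disjoint_left.mp hBX h) hxX, fun h => ?_⟩
        have := ht h; simp [hU] at this; exact this.2 hxX
      · exact ⟨hxE, by push_neg; exact ⟨hxB, hxt⟩⟩
  calc ∑ t ∈ U.powerset, ((∏ σ ∈ B ∪ t, p σ) * ∏ σ ∈ E \ (B ∪ t), (1 - p σ))
      = ∑ t ∈ U.powerset, ((∏ σ ∈ B, p σ) * ∏ σ ∈ X, (1 - p σ)) *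
          ((∏ σ ∈ t, p σ) * ∏ σ ∈ U \ t, (1 - p σ)) := by
        apply Finset.sum_congr rfl
        intro t ht
        simp only [mem_powerset] at ht
        rw [hEdecomp t ht, Finset.prod_union (hUB.mono_right ht),
          Finset.prod_union]
        · ring
        · refine Finset.disjoint_left.mpr fun x hx hx' => ?_
          have := (sdiff_subset (s := U) (t := t)) hx'
          simp [hU] at this; exact this.2 hx
    _ = ((∏ σ ∈ B, p σ) * ∏ σ ∈ X, (1 - p σ)) * ∏ σ ∈ U, (p σ + (1 - p σ)) := by
        rw [Finset.prod_add, Finset.mul_sum]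
    _ = (∏ σ ∈ B, p σ) * ∏ σ ∈ X, (1 - p σ) := by
        simp

lemma prod_card_group {β : Type*} [DecidableEq β] (A : Finset (Finset β)) (r : ℕ) (g : ℕ → ℝ)
    (hA : ∀ σ ∈ A, σ.Nonempty ∧ σ.card ≤ r + 1) :
    ∏ σ ∈ A, g (σ.card - 1)
      = ∏ i ∈ Finset.range (r + 1), g i ^ (A.filter (fun σ => σ.card = i + 1)).card := by
  classical
  rw [← Finset.prod_fiberwise_of_maps_to (g := fun σ : Finset β => σ.card - 1)
    (t := Finset.range (r + 1)) (fun σ hσ => ?_) (fun σ => g (σ.card - 1))]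
  · apply Finset.prod_congr rfl
    intro i _
    have : A.filter (fun σ => σ.card - 1 = i) = A.filter (fun σ => σ.card = i + 1) := by
      apply Finset.filter_congr
      intro σ hσ
      have h1 : 1 ≤ σ.card := Finset.card_pos.mpr (hA σ hσ).1
      constructor <;> intro h <;> omega
    rw [this, Finset.prod_congr rfl (fun σ hσ => ?_), Finset.prod_const]
    have : σ.card = i + 1 := (Finset.mem_filter.mp hσ).2
    rw [this]; simp
  · have h1 : 1 ≤ σ.card := Finset.card_pos.mpr (hA σ hσ).1
    have h2 := (hA σ hσ).2
    simp only [Finset.mem_range]; omega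

open scoped Classical in
noncomputable def Efaces (n r : ℕ) : Finset (Finset (Fin n)) :=
  univ.filter fun σ => σ.Nonempty ∧ σ.card ≤ r + 1

open scoped Classical in
noncomputable def toComplex (n r : ℕ) (ω : Finset (Finset (Fin n))) : Finset (Finset (Fin n)) :=
  (Efaces n r).filter fun σ => ∀ τ ⊆ σ, τ.Nonempty → τ ∈ ω

open scoped Classical in
noncomputable def Xset (n r : ℕ) (Y : Finset (Finset (Fin n))) : Finset (Finset (Fin n)) :=
  (Efaces n r).filter fun σ => σ ∉ Y ∧ ∀ τ ⊆ σ, τ.card + 1 = σ.card → τ.Nonempty → τ ∈ Y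

lemma mem_Efaces {n r : ℕ} {σ : Finset (Fin n)} :
    σ ∈ Efaces n r ↔ σ.Nonempty ∧ σ.card ≤ r + 1 := by
  simp [Efaces]

lemma toComplex_isComplex (n r : ℕ) (ω : Finset (Finset (Fin n))) :
    IsComplex n r (toComplex n r ω) := by
  constructor
  · intro σ hσ
    exact mem_Efaces.mp (Finset.mem_filter.mp hσ).1
  · intro σ hσ τ hτσ hτne
    rw [toComplex, Finset.mem_filter] at hσ ⊢
    refine ⟨mem_Efaces.mpr ⟨hτne, le_trans (Finset.card_le_card hτσ)
      (mem_Efaces.mp hσ.1).2⟩, fun ρ hρ hρne => hσ.2 ρ (hρ.trans hτσ) hρne⟩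

lemma toComplex_eq_iff {n r : ℕ} {Y ω : Finset (Finset (Fin n))}
    (hY : IsComplex n r Y) :
    toComplex n r ω = Y ↔ Y ⊆ ω ∧ Disjoint ω (Xset n r Y) := by
  constructor
  · rintro rfl
    constructor
    · intro σ hσ
      have h := (Finset.mem_filter.mp hσ).2
      exact h σ (subset_refl σ) (mem_Efaces.mp (Finset.mem_filter.mp hσ).1).1
    · refine Finset.disjoint_left.mpr fun σ hσω hσX => ?_
      rw [Xset, Finset.mem_filter] at hσX
      obtain ⟨hσE, hσnY, hsub⟩ := hσX
      apply hσnY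
      rw [toComplex, Finset.mem_filter]
      refine ⟨hσE, fun τ hτσ hτne => ?_⟩
      by_cases hτeq : τ = σ
      · exact hτeq ▸ hσω
      · have hlt : τ.card < σ.card := Finset.card_lt_card (ssubset_of_subset_of_ne hτσ hτeq)
        have hτpos : 1 ≤ τ.card := Finset.card_pos.mpr hτne
        obtain ⟨ρ, hτρ, hρσ, hρcard⟩ := Finset.exists_subsuperset_card_eq hτσ
          (by omega : τ.card ≤ σ.card - 1) (by omega)
        have hρY : ρ ∈ toComplex n r ω := hsub ρ hρσ (by omega)
          (Finset.card_pos.mp (by omega))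
        have hτY : τ ∈ toComplex n r ω := (toComplex_isComplex n r ω).2 ρ hρY τ hτρ hτne
        have := (Finset.mem_filter.mp hτY).2
        exact this τ (subset_refl τ) hτne
  · rintro ⟨hYω, hdisj⟩
    have main : ∀ k (σ : Finset (Fin n)), σ.card = k → σ ∈ toComplex n r ω → σ ∈ Y := by
      intro k
      induction k using Nat.strong_induction_on with
      | _ k ih =>
        intro σ hcard hσ
        by_contra hσnY
        have hσE := (Finset.mem_filter.mp hσ).1
        have hσω : σ ∈ ω := (Finset.mem_filter.mp hσ).2 σ (subset_refl σ)
          (mem_Efaces.mp hσE).1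
        have hσX : σ ∈ Xset n r Y := by
          rw [Xset, Finset.mem_filter]
          refine ⟨hσE, hσnY, fun τ hτσ hτcard hτne => ?_⟩
          have hτtc : τ ∈ toComplex n r ω :=
            (toComplex_isComplex n r ω).2 σ hσ τ hτσ hτne
          exact ih τ.card (by omega) τ rfl hτtc
        exact Finset.disjoint_left.mp hdisj hσω hσX
    apply Finset.Subset.antisymm
    · intro σ hσ; exact main σ.card σ rfl hσ
    · intro σ hσ
      rw [toComplex, Finset.mem_filter]
      refine ⟨mem_Efaces.mpr (hY.1 σ hσ), fun τ hτσ hτne => hYω (hY.2 σ hσ τ hτσ hτne)⟩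

lemma eCount_eq {n r : ℕ} (Y : Finset (Finset (Fin n))) (i : ℕ) (hi : i < r + 1) :
    eCount Y i = ((Xset n r Y).filter (fun σ => σ.card = i + 1)).card := by
  classical
  unfold eCount
  congr 1
  ext σ
  simp only [Finset.mem_filter, Finset.mem_univ, true_and, Xset, mem_Efaces]
  constructor
  · rintro ⟨hc, hnY, hsub⟩
    refine ⟨⟨⟨Finset.card_pos.mp (by omega), by omega⟩, hnY, fun τ hτσ hτc hτne => ?_⟩, hc⟩
    exact hsub τ hτσ (by omega) hτne
  · rintro ⟨⟨⟨hne, hle⟩, hnY, hsub⟩, hc⟩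
    exact ⟨hc, hnY, fun τ hτσ hτc hτne => hsub τ hτσ (by omega) hτne⟩

lemma weight_eq {n r : ℕ} (p : ℕ → ℝ) {Y : Finset (Finset (Fin n))} (hY : IsComplex n r Y) :
    weight n r p Y
      = (∏ σ ∈ Y, p (σ.card - 1)) * ∏ σ ∈ Xset n r Y, (1 - p (σ.card - 1)) := by
  classical
  rw [weight]
  have hXsub : ∀ σ ∈ Xset n r Y, σ.Nonempty ∧ σ.card ≤ r + 1 := by
    intro σ hσ
    exact mem_Efaces.mp (Finset.mem_filter.mp hσ).1
  rw [prod_card_group Y r p hY.1, prod_card_group (Xset n r Y) r (fun i => 1 - p i) hXsub,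
    ← Finset.prod_mul_distrib]
  apply Finset.prod_congr rfl
  intro i hi
  rw [eCount_eq Y i (Finset.mem_range.mp hi)]
  congr 1

lemma sum_weight_eq (n r : ℕ) (p : ℕ → ℝ) (A : Finset (Finset (Finset (Fin n))))
    (hA : A ⊆ complexes n r) :
    ∑ Y ∈ A, weight n r p Y
      = ∑ ω ∈ (Efaces n r).powerset.filter (fun ω => toComplex n r ω ∈ A),
          ((∏ σ ∈ ω, p (σ.card - 1)) * ∏ σ ∈ Efaces n r \ ω, (1 - p (σ.card - 1))) := by
  classical
  rw [← Finset.sum_fiberwise_of_maps_to (g := toComplex n r) (t := A)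
    (fun ω hω => (Finset.mem_filter.mp hω).2)
    (fun ω => (∏ σ ∈ ω, p (σ.card - 1)) * ∏ σ ∈ Efaces n r \ ω, (1 - p (σ.card - 1)))]
  apply Finset.sum_congr rfl
  intro Y hYA
  have hY : IsComplex n r Y := by
    have := hA hYA
    simp only [complexes, Finset.mem_filter, Finset.mem_univ, true_and] at this
    exact this
  have hfil : (((Efaces n r).powerset.filter (fun ω => toComplex n r ω ∈ A)).filter
      (fun ω => toComplex n r ω = Y))
      = (Efaces n r).powerset.filter (fun ω => Y ⊆ ω ∧ Disjoint ω (Xset n r Y)) := by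
    ext ω
    simp only [Finset.mem_filter, Finset.mem_powerset, and_assoc]
    constructor
    · rintro ⟨h1, _, h3⟩
      exact ⟨h1, (toComplex_eq_iff hY).mp h3⟩
    · rintro ⟨h1, h2, h3⟩
      have h4 := (toComplex_eq_iff hY).mpr ⟨h2, h3⟩
      exact ⟨h1, h4 ▸ hYA, h4⟩
  rw [hfil, sum_prod_interval (Efaces n r) Y (Xset n r Y) (fun σ => p (σ.card - 1))
    (fun σ hσ => mem_Efaces.mpr (hY.1 σ hσ)) (Finset.filter_subset _ _)
    (Finset.disjoint_left.mpr fun σ hσ hσX =>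
      ((Finset.mem_filter.mp hσX).2.1) hσ), weight_eq p hY]

lemma rpow_sum_eq {x : ℝ} (hx : 0 < x) {ι : Type*} (s : Finset ι) (f : ι → ℝ) :
    x ^ (∑ i ∈ s, f i) = ∏ i ∈ s, x ^ f i := by
  classical
  induction s using Finset.induction_on with
  | empty => simp
  | @insert a s' ha ih =>
      rw [Finset.sum_insert ha, Finset.prod_insert ha, Real.rpow_add hx, ih]

lemma union_bound {ι κ : Type*} [Fintype κ] (s : Finset ι) (Q : κ → ι → Prop)
    [DecidableEq ι] [∀ k i, Decidable (Q k i)] (w : ι → ℝ) (hw : ∀ i ∈ s, 0 ≤ w i)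
    (h : ∀ i ∈ s, ∃ k, Q k i) :
    ∑ i ∈ s, w i ≤ ∑ k : κ, ∑ i ∈ s.filter (Q k), w i := by
  calc ∑ i ∈ s, w i ≤ ∑ i ∈ s, ∑ k : κ, (if Q k i then w i else 0) := by
        apply Finset.sum_le_sum
        intro i hi
        obtain ⟨k₀, hk₀⟩ := h i hi
        have hle := Finset.single_le_sum (f := fun k : κ => if Q k i then w i else 0)
          (fun k _ => by split
                         · exact hw i hi
                         · exact le_rfl) (Finset.mem_univ k₀)
        rwa [if_pos hk₀] at hle
    _ = ∑ k : κ, ∑ i ∈ s.filter (Q k), w i := by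
        rw [Finset.sum_comm]
        exact Finset.sum_congr rfl fun k _ => (Finset.sum_filter _ _).symm

open scoped Classical in
/-- if `∑ α_i f_i(S) > f_0(S)` then a.a.s. `S` does not embed into
the random complex `Y ∈ Y_r(n; n^{-α})`. -/
theorem stmt7 {V : Type*} [DecidableEq V] [Fintype V] (r : ℕ)
    (S : Finset (Finset V)) (hS : IsSimpComplex S)
    (hdim : ∀ σ ∈ S, σ.card ≤ r + 1)
    (hV : ∀ x : V, ∃ σ ∈ S, x ∈ σ)
    (α : ℕ → ℝ) (hα : ∀ i, 0 ≤ α i)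
    (hdens : (fS S 0 : ℝ) < ∑ i ∈ Finset.range (r + 1), α i * fS S i) :
    Tendsto (fun n : ℕ =>
      ∑ Y ∈ (complexes n r).filter
        (fun Y => ∃ J : V ↪ Fin n, ∀ σ ∈ S, σ.map J ∈ Y),
        weight n r (fun i => (n : ℝ) ^ (-α i)) Y)
      atTop (nhds 0) := by
  classical
  have hcardV : Fintype.card V = fS S 0 := by
    rw [fS, ← Finset.card_univ]
    apply Finset.card_nbij (i := fun x => ({x} : Finset V))
    · intro x _
      simp only [Finset.mem_coe, Finset.mem_filter, Finset.card_singleton, and_true]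
      obtain ⟨σ, hσS, hxσ⟩ := hV x
      exact hS.2.2 σ hσS {x} (Finset.singleton_subset_iff.mpr hxσ) ⟨x, Finset.mem_singleton_self x⟩
    · intro x _ y _ h
      simpa using h
    · intro σ hσ
      simp only [Finset.coe_filter, Set.mem_setOf_eq] at hσ
      obtain ⟨x, rfl⟩ := Finset.card_eq_one.mp hσ.2
      exact ⟨x, by simp⟩
  set c : ℝ := ∑ i ∈ Finset.range (r + 1), α i * fS S i with hc
  have hcpos : (fS S 0 : ℝ) < c := hdens
  set F : ℕ → ℝ := fun n =>
      ∑ Y ∈ (complexes n r).filter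
        (fun Y => ∃ J : V ↪ Fin n, ∀ σ ∈ S, σ.map J ∈ Y),
        weight n r (fun i => (n : ℝ) ^ (-α i)) Y with hF
  have key : ∀ n : ℕ, 1 ≤ n →
      0 ≤ F n ∧ F n ≤ ((n : ℝ)) ^ ((fS S 0 : ℝ) - c) := by
    intro n hn
    have hn0 : (0 : ℝ) < (n : ℝ) := by exact_mod_cast hn
    have hn1 : (1 : ℝ) ≤ (n : ℝ) := by exact_mod_cast hn
    set p : ℕ → ℝ := fun i => (n : ℝ) ^ (-α i) with hp
    have hp0 : ∀ i, 0 ≤ p i := fun i => Real.rpow_nonneg (le_of_lt hn0) _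
    have hp1 : ∀ i, p i ≤ 1 := fun i =>
      Real.rpow_le_one_of_one_le_of_nonpos hn1 (neg_nonpos.mpr (hα i))
    set A := (complexes n r).filter
        (fun Y => ∃ J : V ↪ Fin n, ∀ σ ∈ S, σ.map J ∈ Y) with hA
    set w : Finset (Finset (Fin n)) → ℝ := fun ω =>
      (∏ σ ∈ ω, p (σ.card - 1)) * ∏ σ ∈ Efaces n r \ ω, (1 - p (σ.card - 1)) with hw
    have hwnn : ∀ ω : Finset (Finset (Fin n)), 0 ≤ w ω := by
      intro ω
      apply mul_nonneg
      · exact Finset.prod_nonneg fun σ _ => hp0 _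
      · exact Finset.prod_nonneg fun σ _ => by linarith [hp1 (σ.card - 1)]
    set s := (Efaces n r).powerset.filter (fun ω => toComplex n r ω ∈ A) with hs
    have hFsum : F n = ∑ ω ∈ s, w ω :=
      sum_weight_eq n r p A (Finset.filter_subset _ _)
    constructor
    · rw [hFsum]
      exact Finset.sum_nonneg fun ω _ => hwnn ω
    · have hcond : ∀ ω ∈ s, ∃ J : V ↪ Fin n, ∀ σ ∈ S, σ.map J ∈ ω := by
        intro ω hω
        have h2 := (Finset.mem_filter.mp hω).2
        rw [hA, Finset.mem_filter] at h2
        obtain ⟨_, J, hJ⟩ := h2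
        refine ⟨J, fun σ hσ => ?_⟩
        have := hJ σ hσ
        exact (Finset.mem_filter.mp this).2 _ (subset_refl _)
          ((Finset.map_nonempty (f := J)).mpr (hS.2.1 σ hσ))
      have step1 : F n ≤ ∑ J : V ↪ Fin n,
          ∑ ω ∈ s.filter (fun ω => ∀ σ ∈ S, σ.map J ∈ ω), w ω := by
        rw [hFsum]
        exact union_bound s (fun J ω => ∀ σ ∈ S, σ.map J ∈ ω) w (fun ω _ => hwnn ω) hcond
      have step2 : ∀ J : V ↪ Fin n,
          ∑ ω ∈ s.filter (fun ω => ∀ σ ∈ S, σ.map J ∈ ω), w ω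
          ≤ ∏ σ ∈ S, p (σ.card - 1) := by
        intro J
        have hsub : s.filter (fun ω => ∀ σ ∈ S, σ.map J ∈ ω)
            ⊆ (Efaces n r).powerset.filter
              (fun ω => (S.image (fun σ => σ.map J)) ⊆ ω ∧
                Disjoint ω (∅ : Finset (Finset (Fin n)))) := by
          intro ω hω
          simp only [hs, Finset.mem_filter, Finset.mem_powerset] at hω ⊢
          refine ⟨hω.1.1, fun τ hτ => ?_, Finset.disjoint_empty_right ω⟩
          obtain ⟨σ, hσS, rfl⟩ := Finset.mem_image.mp hτ
          exact hω.2 σ hσS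
        have hle : ∑ ω ∈ s.filter (fun ω => ∀ σ ∈ S, σ.map J ∈ ω), w ω
            ≤ ∑ ω ∈ (Efaces n r).powerset.filter
              (fun ω => (S.image (fun σ => σ.map J)) ⊆ ω ∧
                Disjoint ω (∅ : Finset (Finset (Fin n)))), w ω :=
          Finset.sum_le_sum_of_subset_of_nonneg hsub (fun ω _ _ => hwnn ω)
        have heq : ∑ ω ∈ (Efaces n r).powerset.filter
              (fun ω => (S.image (fun σ => σ.map J)) ⊆ ω ∧
                Disjoint ω (∅ : Finset (Finset (Fin n)))), w ω
            = (∏ σ ∈ S.image (fun σ => σ.map J), p (σ.card - 1)) *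
              ∏ σ ∈ (∅ : Finset (Finset (Fin n))), (1 - p (σ.card - 1)) := by
          simp only [hw]
          apply sum_prod_interval
          · intro τ hτ
            obtain ⟨σ, hσS, rfl⟩ := Finset.mem_image.mp hτ
            rw [mem_Efaces, Finset.card_map]
            exact ⟨(Finset.map_nonempty (f := J)).mpr (hS.2.1 σ hσS), hdim σ hσS⟩
          · exact Finset.empty_subset _
          · exact Finset.disjoint_empty_right _
        have heq2 : (∏ σ ∈ S.image (fun σ => σ.map J), p (σ.card - 1)) *
              ∏ σ ∈ (∅ : Finset (Finset (Fin n))), (1 - p (σ.card - 1))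
            = ∏ σ ∈ S, p (σ.card - 1) := by
          rw [Finset.prod_empty, mul_one]
          rw [Finset.prod_image (fun σ _ τ _ h => Finset.map_injective J h)]
          exact Finset.prod_congr rfl fun σ _ => by rw [Finset.card_map]
        rw [heq, heq2] at hle
        exact hle
      have hSprod : ∏ σ ∈ S, p (σ.card - 1) = (n : ℝ) ^ (-c) := by
        rw [prod_card_group S r p (fun σ hσ => ⟨hS.2.1 σ hσ, hdim σ hσ⟩)]
        rw [hc, ← Finset.sum_neg_distrib, rpow_sum_eq hn0]
        apply Finset.prod_congr rfl
        intro i _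
        rw [hp]
        rw [← Real.rpow_natCast ((n:ℝ) ^ (-α i)) _, ← Real.rpow_mul (le_of_lt hn0)]
        congr 1
        rw [fS]
        ring
      have hcount : (Fintype.card (V ↪ Fin n) : ℝ) ≤ (n : ℝ) ^ ((fS S 0 : ℝ)) := by
        rw [Fintype.card_embedding_eq, Fintype.card_fin, hcardV]
        have h1 : ((n.descFactorial (fS S 0) : ℕ) : ℝ) ≤ ((n ^ (fS S 0) : ℕ) : ℝ) := by
          exact_mod_cast Nat.descFactorial_le_pow n (fS S 0)
        have h2 : ((n ^ (fS S 0) : ℕ) : ℝ) = (n : ℝ) ^ ((fS S 0 : ℝ)) := by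
          rw [Nat.cast_pow, ← Real.rpow_natCast]
        rw [← h2]
        exact h1
      have h3 : F n ≤ (Fintype.card (V ↪ Fin n) : ℝ) * ((n : ℝ) ^ (-c)) := by
        refine (step1.trans (Finset.sum_le_sum fun J _ => step2 J)).trans_eq ?_
        rw [Finset.sum_const, hSprod, nsmul_eq_mul, Fintype.card]
      have h4 : (Fintype.card (V ↪ Fin n) : ℝ) * ((n : ℝ) ^ (-c))
          ≤ (n : ℝ) ^ ((fS S 0 : ℝ)) * ((n : ℝ) ^ (-c)) :=
        mul_le_mul_of_nonneg_right hcount (Real.rpow_nonneg hn0.le _)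
      have h5 : (n : ℝ) ^ ((fS S 0 : ℝ)) * ((n : ℝ) ^ (-c))
          = (n : ℝ) ^ ((fS S 0 : ℝ) - c) := by
        rw [← Real.rpow_add hn0]
        ring_nf
      linarith
  have hg : Tendsto (fun n : ℕ => ((n : ℝ)) ^ ((fS S 0 : ℝ) - c)) atTop (nhds 0) := by
    have h1 : (0 : ℝ) < c - (fS S 0 : ℝ) := by linarith
    have h2 := (tendsto_rpow_neg_atTop h1).comp (tendsto_natCast_atTop_atTop (R := ℝ))
    have h3 : (fun n : ℕ => ((n : ℝ)) ^ ((fS S 0 : ℝ) - c))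
        = (fun x : ℝ => x ^ (-(c - (fS S 0 : ℝ)))) ∘ (Nat.cast : ℕ → ℝ) := by
      funext n
      simp only [Function.comp_apply]
      ring_nf
    rw [h3]
    exact h2
  apply tendsto_of_tendsto_of_tendsto_of_le_of_le' tendsto_const_nhds hg
  · filter_upwards [eventually_ge_atTop 1] with n hn
    exact (key n hn).1
  · filter_upwards [eventually_ge_atTop 1] with n hn
    exact (key n hn).2
end

section
/- Let S be a fixed finite abstract simplicial complex of dimension at most r, and let α = (α_0,…,α_r) with all α_i ≥ 0 satisfy the following: for every nonempty subcomplex T ⊆ S, ∑_{i=0}^r α_i·f_i(T) < f_0(T) (i.e. α lies in the domain 𝑀̃(S)). For each n set p_i = n^{−α_i}. Then the P_r-probability that S embeds into the random complex Y ∈ Y_r(n; n^{−α}) tends to 1 as n → ∞. -/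
open Finset Filter

set_option linter.unusedSectionVars false

open scoped Classical

namespace Stmt8

/-- generic: product of ite over subset split -/
lemma prod_ite_mem_split {X : Type*} [DecidableEq X] (R t : Finset X) (a b : X → ℝ)
    (h : t ⊆ R) :
    ∏ σ ∈ R, (if σ ∈ t then a σ else b σ) = (∏ σ ∈ t, a σ) * ∏ σ ∈ R \ t, b σ := by
  rw [← Finset.union_sdiff_of_subset h, Finset.prod_union (Finset.disjoint_sdiff)]
  congr 1
  · exact Finset.prod_congr rfl fun x hx => if_pos hx
  · rw [Finset.union_sdiff_of_subset h]
    exact Finset.prod_congr rfl fun x hx => if_neg (Finset.mem_sdiff.mp hx).2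

lemma sum_powerset_prod_ite {X : Type*} [DecidableEq X] (R : Finset X) (a b : X → ℝ) :
    ∑ t ∈ R.powerset, ∏ σ ∈ R, (if σ ∈ t then a σ else b σ)
      = ∏ σ ∈ R, (a σ + b σ) := by
  rw [Finset.prod_add]
  exact Finset.sum_congr rfl fun t ht =>
    prod_ite_mem_split R t a b (Finset.mem_powerset.mp ht)

/-- cylinder sum -/
lemma cylinder_sum {X : Type*} [DecidableEq X] (A F E : Finset X) (a b : X → ℝ)
    (hF : F ⊆ A) (hE : E ⊆ A) (hFE : Disjoint F E) (hab : ∀ x ∈ A, a x + b x = 1) :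
    ∑ ω ∈ A.powerset.filter (fun ω => F ⊆ ω ∧ Disjoint ω E),
      ∏ σ ∈ A, (if σ ∈ ω then a σ else b σ)
      = (∏ σ ∈ F, a σ) * ∏ σ ∈ E, b σ := by
  set R := A \ (F ∪ E) with hR
  have key : ∀ ω ∈ A.powerset.filter (fun ω => F ⊆ ω ∧ Disjoint ω E),
      ∏ σ ∈ A, (if σ ∈ ω then a σ else b σ)
        = ((∏ σ ∈ F, a σ) * ∏ σ ∈ E, b σ) *
            ∏ σ ∈ R, (if σ ∈ ω \ F then a σ else b σ) := by
    intro ω hω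
    rw [Finset.mem_filter, Finset.mem_powerset] at hω
    obtain ⟨hωA, hFω, hωE⟩ := hω
    have hA : A = (F ∪ E) ∪ R := by
      rw [hR, Finset.union_sdiff_of_subset (Finset.union_subset hF hE)]
    rw [hA, Finset.prod_union (Finset.disjoint_sdiff),
      Finset.prod_union hFE]
    congr 1
    · congr 1
      · exact Finset.prod_congr rfl fun x hx => if_pos (hFω hx)
      · exact Finset.prod_congr rfl fun x hx => if_neg
          (fun hxω => (Finset.disjoint_left.mp hωE) hxω hx)
    · refine Finset.prod_congr rfl fun x hx => ?_
      have hxF : x ∉ F := fun h => (Finset.mem_sdiff.mp hx).2 (Finset.mem_union_left _ h)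
      by_cases hxω : x ∈ ω
      · rw [if_pos hxω, if_pos (Finset.mem_sdiff.mpr ⟨hxω, hxF⟩)]
      · rw [if_neg hxω, if_neg (fun h => hxω (Finset.mem_sdiff.mp h).1)]
  rw [Finset.sum_congr rfl key, ← Finset.mul_sum]
  have hbij : ∑ ω ∈ A.powerset.filter (fun ω => F ⊆ ω ∧ Disjoint ω E),
      ∏ σ ∈ R, (if σ ∈ ω \ F then a σ else b σ)
      = ∑ t ∈ R.powerset, ∏ σ ∈ R, (if σ ∈ t then a σ else b σ) := by
    refine Finset.sum_bij' (fun ω _ => ω \ F) (fun t _ => t ∪ F) ?_ ?_ ?_ ?_ ?_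
    · intro ω hω
      rw [Finset.mem_filter, Finset.mem_powerset] at hω
      rw [Finset.mem_powerset, hR]
      intro x hx
      rw [Finset.mem_sdiff] at hx ⊢
      refine ⟨hω.1 hx.1, ?_⟩
      rw [Finset.mem_union]
      rintro (h | h)
      · exact hx.2 h
      · exact (Finset.disjoint_left.mp hω.2.2) hx.1 h
    · intro t ht
      rw [Finset.mem_powerset] at ht
      rw [Finset.mem_filter, Finset.mem_powerset]
      refine ⟨Finset.union_subset (fun x hx => (Finset.mem_sdiff.mp (ht hx)).1) hF,
        Finset.subset_union_right, ?_⟩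
      rw [Finset.disjoint_left]
      intro x hx hxE
      rcases Finset.mem_union.mp hx with h | h
      · exact (Finset.mem_sdiff.mp (ht h)).2 (Finset.mem_union_right _ hxE)
      · exact (Finset.disjoint_left.mp hFE) h hxE
    · intro ω hω
      rw [Finset.mem_filter, Finset.mem_powerset] at hω
      show ω \ F ∪ F = ω
      rw [Finset.sdiff_union_of_subset hω.2.1]
    · intro t ht
      rw [Finset.mem_powerset] at ht
      show (t ∪ F) \ F = t
      rw [Finset.union_sdiff_right]
      refine Finset.sdiff_eq_self_of_disjoint ?_
      rw [Finset.disjoint_right, hR] at *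
      intro x hxF hxt
      exact (Finset.mem_sdiff.mp (ht hxt)).2 (Finset.mem_union_left _ hxF)
    · intro ω hω; rfl
  rw [hbij, sum_powerset_prod_ite]
  have : ∏ σ ∈ R, (a σ + b σ) = 1 := by
    refine Finset.prod_eq_one fun x hx => hab x ?_
    exact (Finset.mem_sdiff.mp hx).1
  rw [this, mul_one]

end Stmt8

namespace Stmt8

variable (n r : ℕ)

noncomputable def faceSets : Finset (Finset (Fin n)) :=
  univ.filter fun σ => σ.Nonempty ∧ σ.card ≤ r + 1

noncomputable def Yof (ω : Finset (Finset (Fin n))) : Finset (Finset (Fin n)) :=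
  ω.filter fun σ => ∀ τ ⊆ σ, τ.Nonempty → τ ∈ ω

noncomputable def extFaces (Y : Finset (Finset (Fin n))) : Finset (Finset (Fin n)) :=
  (faceSets n r).filter fun σ =>
    σ ∉ Y ∧ ∀ τ ⊆ σ, τ.card + 1 = σ.card → τ.Nonempty → τ ∈ Y

noncomputable def wtO (p : ℕ → ℝ) (ω : Finset (Finset (Fin n))) : ℝ :=
  ∏ σ ∈ faceSets n r, if σ ∈ ω then p (σ.card - 1) else 1 - p (σ.card - 1)

lemma mem_faceSets {σ : Finset (Fin n)} :
    σ ∈ faceSets n r ↔ σ.Nonempty ∧ σ.card ≤ r + 1 := by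
  simp [faceSets]

lemma complex_subset_faceSets {Y : Finset (Finset (Fin n))} (hY : IsComplex n r Y) :
    Y ⊆ faceSets n r := fun σ hσ => (mem_faceSets n r).mpr (hY.1 σ hσ)

lemma Yof_isComplex {ω : Finset (Finset (Fin n))} (hω : ω ⊆ faceSets n r) :
    IsComplex n r (Yof n ω) := by
  constructor
  · intro σ hσ
    exact (mem_faceSets n r).mp (hω (Finset.mem_filter.mp hσ).1)
  · intro σ hσ τ hτ hτne
    rw [Yof, Finset.mem_filter] at hσ ⊢
    exact ⟨hσ.2 τ hτ hτne, fun ρ hρ hρne => hσ.2 ρ (hρ.trans hτ) hρne⟩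

lemma Yof_eq_iff {Y ω : Finset (Finset (Fin n))} (hY : IsComplex n r Y)
    (hω : ω ⊆ faceSets n r) :
    Yof n ω = Y ↔ Y ⊆ ω ∧ Disjoint ω (extFaces n r Y) := by
  constructor
  · rintro rfl
    have hcpx : IsComplex n r (Yof n ω) := Yof_isComplex n r hω
    refine ⟨Finset.filter_subset _ _, ?_⟩
    rw [Finset.disjoint_right]
    intro σ hσext hσω
    rw [extFaces, Finset.mem_filter] at hσext
    obtain ⟨hσf, hσY, hbd⟩ := hσext
    apply hσY
    rw [Yof, Finset.mem_filter]
    refine ⟨hσω, fun τ hτ hτne => ?_⟩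
    by_cases hts : τ = σ
    · exact hts ▸ hσω
    · have hτlt : τ.card < σ.card :=
        Finset.card_lt_card (Finset.ssubset_iff_subset_ne.mpr ⟨hτ, hts⟩)
      obtain ⟨ρ, hτρ, hρσ, hρcard⟩ :=
        Finset.exists_subsuperset_card_eq hτ (by omega : τ.card ≤ σ.card - 1)
          (by omega : σ.card - 1 ≤ σ.card)
      have hσne : σ.card ≠ 0 := by
        intro h; rw [Finset.card_eq_zero] at h
        exact (((mem_faceSets n r).mp hσf).1).ne_empty h
      have hρY : ρ ∈ Yof n ω := hbd ρ hρσ (by omega) (hτne.mono hτρ)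
      exact Finset.filter_subset _ ω (hcpx.2 ρ hρY τ hτρ hτne)
  · rintro ⟨hYω, hdisj⟩
    apply Finset.Subset.antisymm
    · intro σ hσ
      by_contra hσY
      have hσω : σ ∈ ω := Finset.filter_subset _ _ hσ
      set C := σ.powerset.filter (fun τ => τ.Nonempty ∧ τ ∉ Y) with hC
      have hCne : C.Nonempty :=
        ⟨σ, Finset.mem_filter.mpr ⟨Finset.mem_powerset_self σ,
          ((mem_faceSets n r).mp (hω hσω)).1, hσY⟩⟩
      obtain ⟨τ, hτC, hτmin⟩ := Finset.exists_min_image C Finset.card hCne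
      rw [hC, Finset.mem_filter, Finset.mem_powerset] at hτC
      obtain ⟨hτσ, hτne, hτY⟩ := hτC
      have hτext : τ ∈ extFaces n r Y := by
        rw [extFaces, Finset.mem_filter]
        refine ⟨(mem_faceSets n r).mpr ⟨hτne,
          le_trans (Finset.card_le_card hτσ) ((mem_faceSets n r).mp (hω hσω)).2⟩,
          hτY, fun ρ hρτ hρcard hρne => ?_⟩
        by_contra hρY
        have : ρ ∈ C := Finset.mem_filter.mpr
          ⟨Finset.mem_powerset.mpr (hρτ.trans hτσ), hρne, hρY⟩
        have := hτmin ρ this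
        omega
      have hτω : τ ∈ ω := (Finset.mem_filter.mp hσ).2 τ hτσ hτne
      exact (Finset.disjoint_left.mp hdisj hτω hτext).elim
    · intro σ hσ
      rw [Yof, Finset.mem_filter]
      exact ⟨hYω hσ, fun τ hτ hτne => hYω (hY.2 σ hσ τ hτ hτne)⟩

end Stmt8

namespace Stmt8

variable (n r : ℕ)

lemma mem_complexes {Y : Finset (Finset (Fin n))} :
    Y ∈ complexes n r ↔ IsComplex n r Y := by simp [complexes]

lemma prod_card_group (B : Finset (Finset (Fin n))) (hB : B ⊆ faceSets n r) (h : ℕ → ℝ) :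
    ∏ σ ∈ B, h (σ.card - 1)
      = ∏ i ∈ Finset.range (r + 1), h i ^ (B.filter fun σ => σ.card = i + 1).card := by
  rw [← Finset.prod_fiberwise_of_maps_to (g := fun σ : Finset (Fin n) => σ.card - 1)
    (t := Finset.range (r + 1)) (fun σ hσ => by
      have h2 := ((mem_faceSets n r).mp (hB hσ)).2
      have h1 : 1 ≤ σ.card := Finset.card_pos.mpr ((mem_faceSets n r).mp (hB hσ)).1
      show σ.card - 1 ∈ Finset.range (r + 1)
      exact Finset.mem_range.mpr (by omega)) (fun σ => h (σ.card - 1))]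
  refine Finset.prod_congr rfl fun i hi => ?_
  have hfe : B.filter (fun σ => σ.card - 1 = i) = B.filter (fun σ => σ.card = i + 1) := by
    refine Finset.filter_congr fun σ hσ => ?_
    have h1 : 1 ≤ σ.card := Finset.card_pos.mpr ((mem_faceSets n r).mp (hB hσ)).1
    constructor <;> intro h' <;> omega
  calc ∏ σ ∈ B.filter (fun σ => σ.card - 1 = i), h (σ.card - 1)
      = ∏ σ ∈ B.filter (fun σ => σ.card - 1 = i), h i :=
        Finset.prod_congr rfl fun σ hσ => by rw [(Finset.mem_filter.mp hσ).2]
    _ = h i ^ (B.filter fun σ => σ.card = i + 1).card := by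
        rw [Finset.prod_const, hfe]

lemma eCount_eq {Y : Finset (Finset (Fin n))} {i : ℕ} (hi : i < r + 1) :
    eCount Y i = ((extFaces n r Y).filter fun σ => σ.card = i + 1).card := by
  unfold eCount
  refine congrArg Finset.card ?_
  ext σ
  simp only [eCount, extFaces, mem_faceSets, Finset.mem_filter, Finset.mem_univ, true_and,
    faceSets]
  constructor
  · rintro ⟨hc, hY, hbd⟩
    refine ⟨⟨⟨Finset.card_pos.mp (by omega), by omega⟩, hY,
      fun τ hτ hcard hne => hbd τ hτ (by omega) hne⟩, hc⟩
  · rintro ⟨⟨_, hY, hbd⟩, hc⟩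
    exact ⟨hc, hY, fun τ hτ hcard hne => hbd τ hτ (by omega) hne⟩

lemma extFaces_subset (Y : Finset (Finset (Fin n))) :
    extFaces n r Y ⊆ faceSets n r := Finset.filter_subset _ _

lemma weight_eq_cyl (p : ℕ → ℝ) {Y : Finset (Finset (Fin n))} (hY : IsComplex n r Y) :
    weight n r p Y = (∏ σ ∈ Y, p (σ.card - 1)) *
      ∏ σ ∈ extFaces n r Y, (1 - p (σ.card - 1)) := by
  rw [weight, Finset.prod_mul_distrib]
  congr 1
  · exact (prod_card_group n r Y (complex_subset_faceSets n r hY) p).symm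
  · rw [prod_card_group n r (extFaces n r Y) (extFaces_subset n r Y) (fun i => 1 - p i)]
    refine Finset.prod_congr rfl fun i hi => ?_
    rw [eCount_eq n r (Finset.mem_range.mp hi)]

lemma weight_eq_fiber_sum (p : ℕ → ℝ) {Y : Finset (Finset (Fin n))}
    (hY : IsComplex n r Y) :
    weight n r p Y
      = ∑ ω ∈ (faceSets n r).powerset.filter (fun ω => Yof n ω = Y), wtO n r p ω := by
  have hfe : (faceSets n r).powerset.filter (fun ω => Yof n ω = Y)
      = (faceSets n r).powerset.filter
          (fun ω => Y ⊆ ω ∧ Disjoint ω (extFaces n r Y)) :=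
    Finset.filter_congr fun ω hω => Yof_eq_iff n r hY (Finset.mem_powerset.mp hω)
  rw [hfe]
  unfold wtO
  rw [cylinder_sum (faceSets n r) Y (extFaces n r Y)
    (fun σ => p (σ.card - 1)) (fun σ => 1 - p (σ.card - 1))
    (complex_subset_faceSets n r hY) (Finset.filter_subset _ _)
    (Finset.disjoint_right.mpr fun σ hσ =>
      (Finset.mem_filter.mp hσ).2.1)
    (fun x _ => by ring)]
  exact weight_eq_cyl n r p hY

lemma sum_weight_supset (p : ℕ → ℝ) {K : Finset (Finset (Fin n))}
    (hK : IsComplex n r K) :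
    ∑ Y ∈ (complexes n r).filter (fun Y => K ⊆ Y), weight n r p Y
      = ∏ i ∈ Finset.range (r + 1), p i ^ fCount K i := by
  set s := (faceSets n r).powerset.filter (fun ω => K ⊆ Yof n ω) with hs
  set t := (complexes n r).filter (fun Y => K ⊆ Y) with ht
  have hmap : ∀ ω ∈ s, Yof n ω ∈ t := by
    intro ω hω
    rw [hs, Finset.mem_filter, Finset.mem_powerset] at hω
    rw [ht, Finset.mem_filter, mem_complexes]
    exact ⟨Yof_isComplex n r hω.1, hω.2⟩
  have h1 : ∑ Y ∈ t, weight n r p Y = ∑ ω ∈ s, wtO n r p ω := by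
    rw [← Finset.sum_fiberwise_of_maps_to hmap (wtO n r p)]
    refine Finset.sum_congr rfl fun Y hY => ?_
    rw [ht, Finset.mem_filter, mem_complexes] at hY
    rw [weight_eq_fiber_sum n r p hY.1]
    congr 1
    rw [hs, Finset.filter_filter]
    refine Finset.filter_congr fun ω hω => ?_
    constructor
    · intro h; exact ⟨by rw [h]; exact hY.2, h⟩
    · rintro ⟨_, h⟩; exact h
  have h2 : s = (faceSets n r).powerset.filter (fun ω => K ⊆ ω) := by
    rw [hs]
    refine Finset.filter_congr fun ω hω => ?_
    rw [Finset.mem_powerset] at hω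
    constructor
    · intro h; exact h.trans (Finset.filter_subset _ _)
    · intro h σ hσ
      rw [Yof, Finset.mem_filter]
      exact ⟨h hσ, fun τ hτ hτne => h (hK.2 σ hσ τ hτ hτne)⟩
  have h3 : (faceSets n r).powerset.filter (fun ω => K ⊆ ω)
      = (faceSets n r).powerset.filter (fun ω => K ⊆ ω ∧ Disjoint ω (∅ : Finset (Finset (Fin n)))) := by
    refine Finset.filter_congr fun ω hω => ?_
    simp
  rw [h1, h2]
  unfold wtO
  rw [h3, cylinder_sum (faceSets n r) K ∅
    (fun σ => p (σ.card - 1)) (fun σ => 1 - p (σ.card - 1))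
    (complex_subset_faceSets n r hK) (Finset.empty_subset _)
    (Finset.disjoint_empty_right K) (fun x _ => by ring)]
  rw [Finset.prod_empty, mul_one]
  exact prod_card_group n r K (complex_subset_faceSets n r hK) p

lemma empty_isComplex : IsComplex n r (∅ : Finset (Finset (Fin n))) := by
  constructor <;> intro σ hσ <;> simp at hσ

lemma sum_weight_one (p : ℕ → ℝ) :
    ∑ Y ∈ complexes n r, weight n r p Y = 1 := by
  have := sum_weight_supset n r p (empty_isComplex n r)
  rw [Finset.filter_true_of_mem (fun Y _ => Finset.empty_subset Y)] at this
  rw [this]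
  refine Finset.prod_eq_one fun i _ => ?_
  have : fCount (∅ : Finset (Finset (Fin n))) i = 0 := by simp [fCount]
  rw [this, pow_zero]

end Stmt8

namespace Stmt8

variable {V : Type*} [DecidableEq V] [Fintype V]

noncomputable def imgC (n : ℕ) (S : Finset (Finset V)) (J : V ↪ Fin n) :
    Finset (Finset (Fin n)) := S.image (fun σ => σ.map J)

noncomputable def Tpair (n : ℕ) (S : Finset (Finset V)) (J1 J2 : V ↪ Fin n) :
    Finset (Finset V) := S.filter (fun σ => σ.map J2 ∈ imgC n S J1)

variable {n r : ℕ} {S : Finset (Finset V)}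

lemma imgC_isComplex (hS : IsSimpComplex S) (hdim : ∀ σ ∈ S, σ.card ≤ r + 1)
    (J : V ↪ Fin n) : IsComplex n r (imgC n S J) := by
  constructor
  · intro τ hτ
    rw [imgC, Finset.mem_image] at hτ
    obtain ⟨σ, hσ, rfl⟩ := hτ
    exact ⟨Finset.map_nonempty.mpr (hS.2.1 σ hσ), by rw [Finset.card_map]; exact hdim σ hσ⟩
  · intro τ hτ τ' hτ' hτ'ne
    rw [imgC, Finset.mem_image] at hτ ⊢
    obtain ⟨σ, hσ, rfl⟩ := hτ
    obtain ⟨u, hu, rfl⟩ := Finset.subset_map_iff.mp hτ'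
    have hune : u.Nonempty := by
      by_contra h
      rw [Finset.not_nonempty_iff_eq_empty] at h
      subst h
      simp at hτ'ne
    exact ⟨u, hS.2.2 σ hσ u hu hune, rfl⟩

lemma fCount_imgC (J : V ↪ Fin n) (i : ℕ) : fCount (imgC n S J) i = fS S i := by
  unfold fCount fS imgC
  rw [Finset.filter_image, Finset.card_image_of_injective _ (Finset.map_injective J)]
  congr 1
  exact Finset.filter_congr fun σ _ => by rw [Finset.card_map]

lemma union_isComplex {A B : Finset (Finset (Fin n))} (hA : IsComplex n r A)
    (hB : IsComplex n r B) : IsComplex n r (A ∪ B) := by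
  constructor
  · intro σ hσ
    rcases Finset.mem_union.mp hσ with h | h
    · exact hA.1 σ h
    · exact hB.1 σ h
  · intro σ hσ τ hτ hτne
    rcases Finset.mem_union.mp hσ with h | h
    · exact Finset.mem_union_left _ (hA.2 σ h τ hτ hτne)
    · exact Finset.mem_union_right _ (hB.2 σ h τ hτ hτne)

lemma fCount_union_inter (A B : Finset (Finset (Fin n))) (i : ℕ) :
    fCount (A ∪ B) i + fCount (A ∩ B) i = fCount A i + fCount B i := by
  unfold fCount
  rw [Finset.filter_union, Finset.filter_inter_distrib]
  exact Finset.card_union_add_card_inter _ _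

lemma Tpair_subset (J1 J2 : V ↪ Fin n) : Tpair n S J1 J2 ⊆ S :=
  Finset.filter_subset _ _

lemma Tpair_closed (hS : IsSimpComplex S) (J1 J2 : V ↪ Fin n) :
    ∀ σ ∈ Tpair n S J1 J2, ∀ τ ⊆ σ, τ.Nonempty → τ ∈ Tpair n S J1 J2 := by
  intro σ hσ τ hτ hτne
  rw [Tpair, Finset.mem_filter] at hσ ⊢
  obtain ⟨hσS, hσmem⟩ := hσ
  refine ⟨hS.2.2 σ hσS τ hτ hτne, ?_⟩
  rw [imgC, Finset.mem_image] at hσmem ⊢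
  obtain ⟨ρ, hρS, hρeq⟩ := hσmem
  have h1 : τ.map J2 ⊆ ρ.map J1 := by
    rw [hρeq]
    exact Finset.map_subset_map.mpr hτ
  obtain ⟨u, hu, huq⟩ := Finset.subset_map_iff.mp h1
  have hune : u.Nonempty := by
    by_contra h
    rw [Finset.not_nonempty_iff_eq_empty] at h
    subst h
    rw [Finset.map_empty, Finset.map_eq_empty] at huq
    exact hτne.ne_empty huq
  exact ⟨u, hS.2.2 ρ hρS u hu hune, huq.symm⟩

lemma fS_Tpair (J1 J2 : V ↪ Fin n) (i : ℕ) :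
    fS (Tpair n S J1 J2) i = fCount (imgC n S J1 ∩ imgC n S J2) i := by
  unfold fS fCount
  rw [← Finset.card_image_of_injective
    ((Tpair n S J1 J2).filter fun σ => σ.card = i + 1) (Finset.map_injective J2)]
  congr 1
  ext τ
  simp only [Finset.mem_image, Finset.mem_filter, Finset.mem_inter, Tpair]
  constructor
  · rintro ⟨σ, ⟨⟨hσS, hσ1⟩, hσc⟩, rfl⟩
    refine ⟨⟨hσ1, ?_⟩, by rw [Finset.card_map]; exact hσc⟩
    rw [imgC, Finset.mem_image]
    exact ⟨σ, hσS, rfl⟩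
  · rintro ⟨⟨h1, h2⟩, hc⟩
    rw [imgC, Finset.mem_image] at h2
    obtain ⟨σ, hσS, rfl⟩ := h2
    exact ⟨σ, ⟨⟨hσS, h1⟩, by rwa [Finset.card_map] at hc⟩, rfl⟩

/-- vertex set of `T` -/
lemma card_vertexSet (T : Finset (Finset V)) :
    ((univ : Finset V).filter fun x => ({x} : Finset V) ∈ T).card = fS T 0 := by
  unfold fS
  rw [← Finset.card_image_of_injective
    ((univ : Finset V).filter fun x => ({x} : Finset V) ∈ T)
    (Finset.singleton_injective)]
  congr 1
  ext σ
  simp only [Finset.mem_image, Finset.mem_filter, Finset.mem_univ, true_and]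
  constructor
  · rintro ⟨x, hx, rfl⟩
    exact ⟨hx, Finset.card_singleton x⟩
  · rintro ⟨hσT, hc⟩
    obtain ⟨a, rfl⟩ := Finset.card_eq_one.mp hc
    exact ⟨a, hσT, rfl⟩

/-- Counting: the number of `J2` with `Tpair J1 J2 = T` is at most `v^w · n^(v-w)`. -/
lemma count_Tpair_le (J1 : V ↪ Fin n) (T : Finset (Finset V)) :
    (((univ : Finset (V ↪ Fin n))).filter (fun J2 => Tpair n S J1 J2 = T)).card
      ≤ Fintype.card V ^ (fS T 0) * n ^ (Fintype.card V - fS T 0) := by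
  classical
  set W : Finset V := (univ : Finset V).filter fun x => ({x} : Finset V) ∈ T with hW
  have hrange : ∀ J2 ∈ ((univ : Finset (V ↪ Fin n))).filter
      (fun J2 => Tpair n S J1 J2 = T), ∀ x ∈ W, ∃ y : V, J1 y = J2 x := by
    intro J2 hJ2 x hx
    rw [Finset.mem_filter] at hJ2 hx
    have hxT : ({x} : Finset V) ∈ T := hx.2
    rw [← hJ2.2, Tpair, Finset.mem_filter] at hxT
    obtain ⟨-, hmem⟩ := hxT
    rw [imgC, Finset.mem_image] at hmem
    obtain ⟨ρ, hρS, hρeq⟩ := hmem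
    have hx2 : J2 x ∈ ρ.map J1 := by
      rw [hρeq]
      simp
    obtain ⟨y, -, hy⟩ := Finset.mem_map.mp hx2
    exact ⟨y, hy⟩
  have hcard := Finset.card_le_card_of_injOn
    (f := fun J2 : V ↪ Fin n =>
      ((fun x : {x // x ∈ W} => @Function.invFun V (Fin n) (Nonempty.intro x.1) (⇑J1) (J2 x.1)),
       (fun x : {x // x ∈ Wᶜ} => J2 x.1)))
    (s := ((univ : Finset (V ↪ Fin n))).filter (fun J2 => Tpair n S J1 J2 = T))
    (t := (univ : Finset (({x // x ∈ W} → V) × ({x // x ∈ Wᶜ} → Fin n))))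
    (fun _ _ => Finset.mem_univ _) ?_
  · calc _ ≤ _ := hcard
    _ = Fintype.card V ^ (fS T 0) * n ^ (Fintype.card V - fS T 0) := by
      rw [Finset.card_univ, Fintype.card_prod, Fintype.card_fun, Fintype.card_fun]
      rw [Fintype.card_coe, Fintype.card_coe, Finset.card_compl, Fintype.card_fin]
      rw [hW, card_vertexSet]
  · intro a ha b hb hab
    rw [Prod.mk.injEq] at hab
    ext x
    by_cases hx : x ∈ W
    · have h1 := congrFun hab.1 ⟨x, hx⟩
      obtain ⟨ya, hya⟩ := hrange a ha x hx
      obtain ⟨yb, hyb⟩ := hrange b hb x hx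
      have ea : J1 (@Function.invFun V (Fin n) (Nonempty.intro x) (⇑J1) (a x)) = a x :=
        @Function.invFun_eq V (Fin n) (Nonempty.intro x) (⇑J1) (a x) ⟨ya, hya⟩
      have eb : J1 (@Function.invFun V (Fin n) (Nonempty.intro x) (⇑J1) (b x)) = b x :=
        @Function.invFun_eq V (Fin n) (Nonempty.intro x) (⇑J1) (b x) ⟨yb, hyb⟩
      rw [← ea, ← eb, h1]
    · have h2 := congrFun hab.2 ⟨x, by rwa [Finset.mem_compl]⟩
      exact congrArg Fin.val h2

end Stmt8

namespace Stmt8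

set_option linter.unusedSectionVars false

section Ex

variable {V : Type*} [DecidableEq V] [Fintype V] {n r : ℕ} {S : Finset (Finset V)}
  (p : ℕ → ℝ)

lemma prob_imgC (hS : IsSimpComplex S) (hdim : ∀ σ ∈ S, σ.card ≤ r + 1) (J : V ↪ Fin n) :
    ∑ Y ∈ (complexes n r).filter (fun Y => imgC n S J ⊆ Y), weight n r p Y
      = ∏ i ∈ Finset.range (r + 1), p i ^ fS S i := by
  rw [sum_weight_supset n r p (imgC_isComplex hS hdim J)]
  exact Finset.prod_congr rfl fun i _ => by rw [fCount_imgC]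

lemma EX_eq (hS : IsSimpComplex S) (hdim : ∀ σ ∈ S, σ.card ≤ r + 1) :
    ∑ Y ∈ complexes n r, weight n r p Y *
      (((univ : Finset (V ↪ Fin n)).filter (fun J => imgC n S J ⊆ Y)).card : ℝ)
      = (Fintype.card (V ↪ Fin n) : ℝ) * ∏ i ∈ Finset.range (r + 1), p i ^ fS S i := by
  have h1 : ∀ Y : Finset (Finset (Fin n)),
      weight n r p Y * (((univ : Finset (V ↪ Fin n)).filter
        (fun J => imgC n S J ⊆ Y)).card : ℝ)
      = ∑ J : V ↪ Fin n, (if imgC n S J ⊆ Y then weight n r p Y else 0) := by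
    intro Y
    rw [← Finset.sum_boole, Finset.mul_sum]
    exact Finset.sum_congr rfl fun J _ => by
      by_cases h : imgC n S J ⊆ Y <;> simp [h]
  rw [Finset.sum_congr rfl fun Y _ => h1 Y, Finset.sum_comm]
  have h2 : ∀ J : V ↪ Fin n,
      ∑ Y ∈ complexes n r, (if imgC n S J ⊆ Y then weight n r p Y else 0)
        = ∏ i ∈ Finset.range (r + 1), p i ^ fS S i := by
    intro J
    rw [← Finset.sum_filter]
    exact prob_imgC p hS hdim J
  rw [Finset.sum_congr rfl fun J _ => h2 J, Finset.sum_const, Finset.card_univ,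
    nsmul_eq_mul]

lemma EX2_eq (hS : IsSimpComplex S) (hdim : ∀ σ ∈ S, σ.card ≤ r + 1) :
    ∑ Y ∈ complexes n r, weight n r p Y *
      ((((univ : Finset (V ↪ Fin n)).filter (fun J => imgC n S J ⊆ Y)).card : ℝ)) ^ 2
      = ∑ J1 : V ↪ Fin n, ∑ J2 : V ↪ Fin n,
          ∏ i ∈ Finset.range (r + 1), p i ^ fCount (imgC n S J1 ∪ imgC n S J2) i := by
  have h1 : ∀ Y : Finset (Finset (Fin n)),
      weight n r p Y * ((((univ : Finset (V ↪ Fin n)).filter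
        (fun J => imgC n S J ⊆ Y)).card : ℝ)) ^ 2
      = ∑ J1 : V ↪ Fin n, ∑ J2 : V ↪ Fin n,
          (if imgC n S J1 ∪ imgC n S J2 ⊆ Y then weight n r p Y else 0) := by
    intro Y
    rw [← Finset.sum_boole (p := fun J : V ↪ Fin n => imgC n S J ⊆ Y), sq,
      Finset.sum_mul_sum, Finset.mul_sum]
    refine Finset.sum_congr rfl fun J1 _ => ?_
    rw [Finset.mul_sum]
    refine Finset.sum_congr rfl fun J2 _ => ?_
    by_cases h1 : imgC n S J1 ⊆ Y <;> by_cases h2 : imgC n S J2 ⊆ Y <;>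
      simp [h1, h2, Finset.union_subset_iff]
  rw [Finset.sum_congr rfl fun Y _ => h1 Y, Finset.sum_comm]
  refine Finset.sum_congr rfl fun J1 _ => ?_
  rw [Finset.sum_comm]
  refine Finset.sum_congr rfl fun J2 _ => ?_
  rw [← Finset.sum_filter]
  exact sum_weight_supset n r p
    (union_isComplex (imgC_isComplex hS hdim J1) (imgC_isComplex hS hdim J2))

end Ex

end Stmt8

namespace Stmt8

section Bound

variable {V : Type*} [DecidableEq V] [Fintype V] {n r : ℕ} {S : Finset (Finset V)}

noncomputable def subcpx (S : Finset (Finset V)) : Finset (Finset (Finset V)) :=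
  S.powerset.filter (fun T => T.Nonempty ∧ ∀ σ ∈ T, ∀ τ ⊆ σ, τ.Nonempty → τ ∈ T)

lemma fS_empty (i : ℕ) : fS (∅ : Finset (Finset V)) i = 0 := by simp [fS]

lemma fS_le_card (T : Finset (Finset V)) : fS T 0 ≤ Fintype.card V := by
  rw [← card_vertexSet]
  exact le_trans (Finset.card_filter_le _ _) (by rw [Finset.card_univ])

lemma EX2_le (hS : IsSimpComplex S) (hdim : ∀ σ ∈ S, σ.card ≤ r + 1)
    (hv : 1 ≤ Fintype.card V)
    (p : ℕ → ℝ) (hp_pos : ∀ i, 0 < p i) :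
    ∑ Y ∈ complexes n r, weight n r p Y *
        ((((univ : Finset (V ↪ Fin n)).filter (fun J => imgC n S J ⊆ Y)).card : ℝ)) ^ 2
      ≤ (Fintype.card (V ↪ Fin n) : ℝ) *
          ((Fintype.card (V ↪ Fin n) : ℝ) * (∏ i ∈ Finset.range (r + 1), p i ^ fS S i) ^ 2
            + ∑ T ∈ subcpx S,
                ((Fintype.card V : ℝ) ^ (Fintype.card V)
                    * (n : ℝ) ^ (Fintype.card V - fS T 0)) *
                  ((∏ i ∈ Finset.range (r + 1), p i ^ fS S i) ^ 2 *
                    (∏ i ∈ Finset.range (r + 1), p i ^ fS T i)⁻¹)) := by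
  classical
  set sS : ℝ := ∏ i ∈ Finset.range (r + 1), p i ^ fS S i with hsS
  set F : Finset (Finset V) → ℝ :=
    fun T => sS ^ 2 * (∏ i ∈ Finset.range (r + 1), p i ^ fS T i)⁻¹ with hF
  have hprod_pos : ∀ T : Finset (Finset V),
      0 < ∏ i ∈ Finset.range (r + 1), p i ^ fS T i :=
    fun T => Finset.prod_pos fun i _ => pow_pos (hp_pos i) _
  have hF_nonneg : ∀ T, 0 ≤ F T := fun T =>
    mul_nonneg (sq_nonneg _) (inv_nonneg.mpr (hprod_pos T).le)
  -- step 1: rewrite EX2 as a pair sum of F (Tpair ...)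
  rw [EX2_eq p hS hdim]
  have term_eq : ∀ J1 J2 : V ↪ Fin n,
      ∏ i ∈ Finset.range (r + 1), p i ^ fCount (imgC n S J1 ∪ imgC n S J2) i
        = F (Tpair n S J1 J2) := by
    intro J1 J2
    have key : (∏ i ∈ Finset.range (r + 1), p i ^ fCount (imgC n S J1 ∪ imgC n S J2) i)
        * (∏ i ∈ Finset.range (r + 1), p i ^ fS (Tpair n S J1 J2) i) = sS ^ 2 := by
      rw [← Finset.prod_mul_distrib, hsS, ← Finset.prod_pow]
      refine Finset.prod_congr rfl fun i _ => ?_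
      rw [← pow_add, ← pow_mul']
      congr 1
      rw [fS_Tpair, fCount_union_inter, fCount_imgC, fCount_imgC, two_mul]
    rw [hF, eq_comm, mul_inv_eq_iff_eq_mul₀ (hprod_pos _).ne', ← key, mul_comm]
  calc ∑ J1 : V ↪ Fin n, ∑ J2 : V ↪ Fin n,
        ∏ i ∈ Finset.range (r + 1), p i ^ fCount (imgC n S J1 ∪ imgC n S J2) i
      = ∑ J1 : V ↪ Fin n, ∑ J2 : V ↪ Fin n, F (Tpair n S J1 J2) := by
        exact Finset.sum_congr rfl fun J1 _ =>
          Finset.sum_congr rfl fun J2 _ => term_eq J1 J2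
    _ ≤ ∑ _J1 : V ↪ Fin n, ((Fintype.card (V ↪ Fin n) : ℝ) * sS ^ 2
          + ∑ T ∈ subcpx S,
              ((Fintype.card V : ℝ) ^ (Fintype.card V)
                  * (n : ℝ) ^ (Fintype.card V - fS T 0)) * F T) := by
        refine Finset.sum_le_sum fun J1 _ => ?_
        -- split according to Tpair = ∅ or not
        rw [← Finset.sum_filter_add_sum_filter_not (univ : Finset (V ↪ Fin n))
          (fun J2 => Tpair n S J1 J2 = ∅)]
        refine add_le_add ?_ ?_
        · -- Tpair = ∅ part
          have h1 : ∀ J2 ∈ (univ : Finset (V ↪ Fin n)).filter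
              (fun J2 => Tpair n S J1 J2 = ∅), F (Tpair n S J1 J2) = sS ^ 2 := by
            intro J2 hJ2
            rw [(Finset.mem_filter.mp hJ2).2, hF]
            simp [fS_empty]
          rw [Finset.sum_congr rfl h1, Finset.sum_const, nsmul_eq_mul]
          refine mul_le_mul_of_nonneg_right ?_ (sq_nonneg _)
          exact_mod_cast Nat.cast_le.mpr (le_trans (Finset.card_filter_le _ _)
            (le_of_eq Finset.card_univ))
        · -- Tpair ≠ ∅ part : group by the value of Tpair
          have hmap : ∀ J2 ∈ (univ : Finset (V ↪ Fin n)).filter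
              (fun J2 => ¬ Tpair n S J1 J2 = ∅), Tpair n S J1 J2 ∈ subcpx S := by
            intro J2 hJ2
            rw [Finset.mem_filter] at hJ2
            rw [subcpx, Finset.mem_filter, Finset.mem_powerset]
            exact ⟨Tpair_subset J1 J2, Finset.nonempty_iff_ne_empty.mpr hJ2.2,
              Tpair_closed hS J1 J2⟩
          rw [← Finset.sum_fiberwise_of_maps_to hmap (fun J2 => F (Tpair n S J1 J2))]
          refine Finset.sum_le_sum fun T hT => ?_
          have h2 : ∀ J2 ∈ ((univ : Finset (V ↪ Fin n)).filter
              (fun J2 => ¬ Tpair n S J1 J2 = ∅)).filter (fun J2 => Tpair n S J1 J2 = T),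
              F (Tpair n S J1 J2) = F T := by
            intro J2 hJ2
            rw [(Finset.mem_filter.mp hJ2).2]
          rw [Finset.sum_congr rfl h2, Finset.sum_const, nsmul_eq_mul]
          refine mul_le_mul_of_nonneg_right ?_ (hF_nonneg T)
          have hcard : (((univ : Finset (V ↪ Fin n)).filter
              (fun J2 => ¬ Tpair n S J1 J2 = ∅)).filter
                (fun J2 => Tpair n S J1 J2 = T)).card
              ≤ Fintype.card V ^ (fS T 0) * n ^ (Fintype.card V - fS T 0) := by
            refine le_trans (Finset.card_le_card ?_) (count_Tpair_le (S := S) J1 T)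
            intro J2 hJ2
            rw [Finset.mem_filter] at hJ2 ⊢
            exact ⟨Finset.mem_univ _, hJ2.2⟩
          calc (↑(((univ : Finset (V ↪ Fin n)).filter
                (fun J2 => ¬ Tpair n S J1 J2 = ∅)).filter
                  (fun J2 => Tpair n S J1 J2 = T)).card : ℝ)
              ≤ ((Fintype.card V ^ (fS T 0) * n ^ (Fintype.card V - fS T 0) : ℕ) : ℝ) := by
                exact_mod_cast hcard
            _ ≤ (Fintype.card V : ℝ) ^ (Fintype.card V)
                  * (n : ℝ) ^ (Fintype.card V - fS T 0) := by
                push_cast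
                refine mul_le_mul_of_nonneg_right ?_ (by positivity)
                refine pow_le_pow_right₀ ?_ (fS_le_card T)
                exact_mod_cast hv
    _ = (Fintype.card (V ↪ Fin n) : ℝ) *
          ((Fintype.card (V ↪ Fin n) : ℝ) * sS ^ 2
            + ∑ T ∈ subcpx S,
                ((Fintype.card V : ℝ) ^ (Fintype.card V)
                    * (n : ℝ) ^ (Fintype.card V - fS T 0)) * F T) := by
        rw [Finset.sum_const, Finset.card_univ, nsmul_eq_mul]

end Bound

end Stmt8

namespace Stmt8

section Main

variable {V : Type*} [DecidableEq V] [Fintype V]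

lemma cheb_point {w x m : ℝ} (hw : 0 ≤ w) : w * (2*m*x - x^2) ≤ m^2 * w := by
  nlinarith [mul_nonneg hw (sq_nonneg (x - m))]

set_option maxHeartbeats 1000000 in
lemma main_bound (r : ℕ) (S : Finset (Finset V)) (hS : IsSimpComplex S)
    (hdim : ∀ σ ∈ S, σ.card ≤ r + 1) (α : ℕ → ℝ) (hα : ∀ i, 0 ≤ α i)
    {n : ℕ} (hn : 2 * Fintype.card V + 2 ≤ n) :
    1 - (Fintype.card V : ℝ) ^ (Fintype.card V) * 2 ^ (Fintype.card V) *
        ∑ T ∈ subcpx S,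
          (n : ℝ) ^ (∑ i ∈ Finset.range (r + 1), α i * (fS T i : ℝ) - (fS T 0 : ℝ))
      ≤ ∑ Y ∈ (complexes n r).filter
          (fun Y => ∃ J : V ↪ Fin n, ∀ σ ∈ S, σ.map J ∈ Y),
          weight n r (fun i => (n : ℝ) ^ (-α i)) Y := by
  classical
  obtain ⟨σ₀, hσ₀⟩ := hS.1
  obtain ⟨x₀, -⟩ := hS.2.1 σ₀ hσ₀
  have hv : 1 ≤ Fintype.card V := Fintype.card_pos_iff.mpr ⟨x₀⟩
  set v := Fintype.card V with hvdef
  have hn0 : (0:ℝ) < n := by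
    have : 0 < n := by omega
    exact_mod_cast this
  have hn1 : (1:ℝ) ≤ n := by
    have : 1 ≤ n := by omega
    exact_mod_cast this
  set p : ℕ → ℝ := fun i => (n:ℝ) ^ (-α i) with hp
  have hp_pos : ∀ i, 0 < p i := fun i => Real.rpow_pos_of_pos hn0 _
  have hp_le1 : ∀ i, p i ≤ 1 := fun i =>
    Real.rpow_le_one_of_one_le_of_nonpos hn1 (neg_nonpos.mpr (hα i))
  have hw_nonneg : ∀ Y : Finset (Finset (Fin n)), 0 ≤ weight n r p Y := fun Y =>
    Finset.prod_nonneg fun i _ => mul_nonneg (pow_nonneg (hp_pos i).le _)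
      (pow_nonneg (by linarith [hp_le1 i]) _)
  set N : ℝ := (Fintype.card (V ↪ Fin n) : ℝ) with hN
  set sS : ℝ := ∏ i ∈ Finset.range (r + 1), p i ^ fS S i with hsS
  have hs_pos : 0 < sS := Finset.prod_pos fun i _ => pow_pos (hp_pos i) _
  have hNlow : ((n:ℝ)/2) ^ v ≤ N := by
    have h1 : (n + 1 - v) ^ v ≤ n.descFactorial v := Nat.pow_sub_le_descFactorial n v
    have h2 : Fintype.card (V ↪ Fin n) = n.descFactorial v := by
      rw [Fintype.card_embedding_eq, Fintype.card_fin]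
    rw [hN, h2]
    calc ((n:ℝ)/2) ^ v ≤ ((n + 1 - v : ℕ) : ℝ) ^ v := by
          refine pow_le_pow_left₀ (by positivity) ?_ v
          rw [Nat.cast_sub (by omega), Nat.cast_add, Nat.cast_one]
          have hcast : (2*v + 2 : ℝ) ≤ n := by exact_mod_cast hn
          linarith
      _ ≤ ((n.descFactorial v : ℕ) : ℝ) := by
          exact_mod_cast h1
  have hN_pos : 0 < N := lt_of_lt_of_le (by positivity) hNlow
  set μ : ℝ := N * sS with hμ
  have hμ_pos : 0 < μ := mul_pos hN_pos hs_pos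
  have hEX : ∑ Y ∈ complexes n r, weight n r p Y *
      (((univ : Finset (V ↪ Fin n)).filter (fun J => imgC n S J ⊆ Y)).card : ℝ) = μ := by
    rw [hμ, hN, hsS]
    exact EX_eq p hS hdim
  set Pn : ℝ := ∑ Y ∈ (complexes n r).filter
      (fun Y => ∃ J : V ↪ Fin n, ∀ σ ∈ S, σ.map J ∈ Y), weight n r p Y with hPn
  set EX2val : ℝ := ∑ Y ∈ complexes n r, weight n r p Y *
      ((((univ : Finset (V ↪ Fin n)).filter (fun J => imgC n S J ⊆ Y)).card : ℝ)) ^ 2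
    with hEX2val
  have hXzero : ∀ Y : Finset (Finset (Fin n)),
      ¬ (∃ J : V ↪ Fin n, ∀ σ ∈ S, σ.map J ∈ Y) →
      ((univ : Finset (V ↪ Fin n)).filter (fun J => imgC n S J ⊆ Y)) = ∅ := by
    intro Y hY
    rw [Finset.filter_eq_empty_iff]
    intro J _ hJ
    exact hY ⟨J, fun σ hσ => hJ (Finset.mem_image_of_mem _ hσ)⟩
  have cheb : 2*μ^2 - EX2val ≤ μ^2 * Pn := by
    have pointwise : ∀ Y ∈ complexes n r,
        weight n r p Y * (2*μ*(((univ : Finset (V ↪ Fin n)).filter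
            (fun J => imgC n S J ⊆ Y)).card : ℝ)
          - ((((univ : Finset (V ↪ Fin n)).filter
            (fun J => imgC n S J ⊆ Y)).card : ℝ))^2)
          ≤ (if (∃ J : V ↪ Fin n, ∀ σ ∈ S, σ.map J ∈ Y)
              then μ^2 * weight n r p Y else 0) := by
      intro Y _
      by_cases he : (∃ J : V ↪ Fin n, ∀ σ ∈ S, σ.map J ∈ Y)
      · rw [if_pos he]
        exact cheb_point (hw_nonneg Y)
      · rw [if_neg he, hXzero Y he]
        simp
    have hsum := Finset.sum_le_sum pointwise
    have hL : ∑ Y ∈ complexes n r, weight n r p Y *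
        (2*μ*(((univ : Finset (V ↪ Fin n)).filter
            (fun J => imgC n S J ⊆ Y)).card : ℝ)
          - ((((univ : Finset (V ↪ Fin n)).filter
            (fun J => imgC n S J ⊆ Y)).card : ℝ))^2)
        = 2*μ*μ - EX2val := by
      rw [Finset.sum_congr rfl (fun Y _ => by
        show _ = 2*μ*(weight n r p Y * (((univ : Finset (V ↪ Fin n)).filter
            (fun J => imgC n S J ⊆ Y)).card : ℝ))
          - weight n r p Y * ((((univ : Finset (V ↪ Fin n)).filter
            (fun J => imgC n S J ⊆ Y)).card : ℝ))^2
        ring), Finset.sum_sub_distrib, ← Finset.mul_sum, hEX, hEX2val]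
    have hR : ∑ Y ∈ complexes n r,
        (if (∃ J : V ↪ Fin n, ∀ σ ∈ S, σ.map J ∈ Y)
          then μ^2 * weight n r p Y else 0) = μ^2 * Pn := by
      rw [← Finset.sum_filter, ← Finset.mul_sum, hPn]
    rw [hL, hR] at hsum
    linarith
  set D : ℝ := ∑ T ∈ subcpx S,
      ((v : ℝ) ^ v * (n : ℝ) ^ (v - fS T 0)) *
        (sS ^ 2 * (∏ i ∈ Finset.range (r + 1), p i ^ fS T i)⁻¹) with hD
  have hEX2 : EX2val ≤ μ^2 + N * D := by
    have h := EX2_le (n := n) hS hdim hv p hp_pos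
    rw [← hsS, ← hN, ← hvdef, ← hD] at h
    rw [hEX2val]
    calc ∑ Y ∈ complexes n r, weight n r p Y *
          ((((univ : Finset (V ↪ Fin n)).filter (fun J => imgC n S J ⊆ Y)).card : ℝ)) ^ 2
        ≤ N * (N * sS ^ 2 + D) := h
      _ = μ^2 + N * D := by rw [hμ]; ring
  have perT : ∀ T ∈ subcpx S,
      ((v : ℝ) ^ v * (n : ℝ) ^ (v - fS T 0)) *
        (sS ^ 2 * (∏ i ∈ Finset.range (r + 1), p i ^ fS T i)⁻¹)
      ≤ (N * sS^2 * ((v:ℝ)^v * 2^v)) *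
          (n : ℝ) ^ (∑ i ∈ Finset.range (r + 1), α i * (fS T i : ℝ) - (fS T 0 : ℝ)) := by
    intro T _
    have hw_le : fS T 0 ≤ v := fS_le_card T
    set aT : ℝ := ∑ i ∈ Finset.range (r + 1), α i * (fS T i : ℝ) with haT
    have einv : (∏ i ∈ Finset.range (r + 1), p i ^ fS T i)⁻¹ = (n:ℝ) ^ aT := by
      have e1 : ∏ i ∈ Finset.range (r + 1), p i ^ fS T i = (n:ℝ) ^ (-aT) := by
        have e0 : -aT = ∑ i ∈ Finset.range (r + 1), (-α i * (fS T i : ℝ)) := by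
          rw [haT, ← Finset.sum_neg_distrib]
          exact Finset.sum_congr rfl fun i _ => by ring
        rw [e0, Real.rpow_sum_of_pos hn0]
        refine Finset.prod_congr rfl fun i _ => ?_
        rw [Real.rpow_mul hn0.le, Real.rpow_natCast]
      rw [e1, ← Real.rpow_neg hn0.le, neg_neg]
    have epow : (n:ℝ) ^ (v - fS T 0) = (n:ℝ) ^ ((v:ℝ) - (fS T 0 : ℝ)) := by
      rw [← Real.rpow_natCast (n:ℝ) (v - fS T 0), Nat.cast_sub hw_le]
    have key2 : (n:ℝ)^((v:ℝ) - (fS T 0 : ℝ)) * (n:ℝ)^aT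
        = (n:ℝ)^(v : ℕ) * (n:ℝ)^(aT - (fS T 0 : ℝ)) := by
      rw [← Real.rpow_natCast (n:ℝ) v, ← Real.rpow_add hn0, ← Real.rpow_add hn0]
      congr 1
      ring
    have hNlow2 : (n:ℝ)^v ≤ N * 2^v := by
      have hx : ((n:ℝ)/2)^v * 2^v = (n:ℝ)^v := by
        rw [← mul_pow, div_mul_cancel₀]
        norm_num
      calc (n:ℝ)^v = ((n:ℝ)/2)^v * 2^v := hx.symm
        _ ≤ N * 2^v := mul_le_mul_of_nonneg_right hNlow (by positivity)
    calc ((v : ℝ) ^ v * (n : ℝ) ^ (v - fS T 0)) *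
          (sS ^ 2 * (∏ i ∈ Finset.range (r + 1), p i ^ fS T i)⁻¹)
        = sS^2 * (v:ℝ)^v * ((n:ℝ)^(v : ℕ) * (n:ℝ)^(aT - (fS T 0 : ℝ))) := by
          rw [epow, einv]
          linear_combination (sS^2 * (v:ℝ)^v) * key2
      _ ≤ sS^2 * (v:ℝ)^v * ((N * 2^v) * (n:ℝ)^(aT - (fS T 0 : ℝ))) := by
          refine mul_le_mul_of_nonneg_left
            (mul_le_mul_of_nonneg_right hNlow2 (by positivity)) (by positivity)
      _ = (N * sS^2 * ((v:ℝ)^v * 2^v)) * (n:ℝ)^(aT - (fS T 0 : ℝ)) := by ring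
  have hD_le : D ≤ N * sS^2 * ((v:ℝ)^v * 2^v) *
      (∑ T ∈ subcpx S, (n : ℝ) ^ (∑ i ∈ Finset.range (r + 1),
        α i * (fS T i : ℝ) - (fS T 0 : ℝ))) := by
    rw [hD, Finset.mul_sum]
    exact Finset.sum_le_sum perT
  set B : ℝ := (v : ℝ) ^ v * 2 ^ v *
      ∑ T ∈ subcpx S, (n : ℝ) ^ (∑ i ∈ Finset.range (r + 1),
        α i * (fS T i : ℝ) - (fS T 0 : ℝ)) with hB
  have hND : N * D ≤ μ^2 * B := by
    have h1 : N * D ≤ N * (N * sS^2 * ((v:ℝ)^v * 2^v) *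
        (∑ T ∈ subcpx S, (n : ℝ) ^ (∑ i ∈ Finset.range (r + 1),
          α i * (fS T i : ℝ) - (fS T 0 : ℝ)))) :=
      mul_le_mul_of_nonneg_left hD_le hN_pos.le
    calc N * D ≤ _ := h1
      _ = μ^2 * B := by rw [hμ, hB]; ring
  have hexp : μ^2 * (1 - B) = μ^2 - μ^2 * B := by ring
  have final : μ^2 * (1 - B) ≤ μ^2 * Pn := by linarith
  exact le_of_mul_le_mul_left final (by positivity : (0:ℝ) < μ^2)

end Main

end Stmt8

open scoped Classical in
/-- if `α ∈ 𝑀̃(S)`, i.e. `∑ α_i f_i(T) < f_0(T)` for every nonempty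
subcomplex `T ⊆ S`, then a.a.s. `S` embeds into the random complex `Y ∈ Y_r(n; n^{-α})`. -/
theorem stmt8 {V : Type*} [DecidableEq V] [Fintype V] (r : ℕ)
    (S : Finset (Finset V)) (hS : IsSimpComplex S)
    (hdim : ∀ σ ∈ S, σ.card ≤ r + 1)
    (hV : ∀ x : V, ∃ σ ∈ S, x ∈ σ)
    (α : ℕ → ℝ) (hα : ∀ i, 0 ≤ α i)
    (hdens : ∀ T : Finset (Finset V), T ⊆ S → T.Nonempty →
      (∀ σ ∈ T, ∀ τ ⊆ σ, τ.Nonempty → τ ∈ T) →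
      ∑ i ∈ Finset.range (r + 1), α i * fS T i < (fS T 0 : ℝ)) :
    Tendsto (fun n : ℕ =>
      ∑ Y ∈ (complexes n r).filter
        (fun Y => ∃ J : V ↪ Fin n, ∀ σ ∈ S, σ.map J ∈ Y),
        weight n r (fun i => (n : ℝ) ^ (-α i)) Y)
      atTop (nhds 1) := by
  classical
  set v := Fintype.card V with hv
  set G : ℕ → ℝ := fun n =>
    1 - (v : ℝ) ^ v * 2 ^ v * ∑ T ∈ Stmt8.subcpx S,
      (n : ℝ) ^ (∑ i ∈ Finset.range (r + 1), α i * (fS T i : ℝ) - (fS T 0 : ℝ)) with hG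
  have hGto : Tendsto G atTop (nhds 1) := by
    have hsum : Tendsto (fun n : ℕ => ∑ T ∈ Stmt8.subcpx S,
        (n : ℝ) ^ (∑ i ∈ Finset.range (r + 1), α i * (fS T i : ℝ) - (fS T 0 : ℝ)))
        atTop (nhds 0) := by
      have h0 : (0 : ℝ) = ∑ T ∈ Stmt8.subcpx S, (0 : ℝ) := by simp
      rw [h0]
      refine tendsto_finset_sum _ fun T hT => ?_
      rw [Stmt8.subcpx, Finset.mem_filter, Finset.mem_powerset] at hT
      have hβ : ∑ i ∈ Finset.range (r + 1), α i * (fS T i : ℝ) - (fS T 0 : ℝ) < 0 := by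
        have := hdens T hT.1 hT.2.1 hT.2.2
        linarith
      have h1 : Tendsto (fun x : ℝ => x ^ (∑ i ∈ Finset.range (r + 1),
          α i * (fS T i : ℝ) - (fS T 0 : ℝ))) atTop (nhds 0) := by
        have := tendsto_rpow_neg_atTop (by linarith :
          (0:ℝ) < -(∑ i ∈ Finset.range (r + 1), α i * (fS T i : ℝ) - (fS T 0 : ℝ)))
        simpa using this
      exact h1.comp tendsto_natCast_atTop_atTop
    have := ((hsum.const_mul ((v : ℝ) ^ v * 2 ^ v)).const_sub 1)
    simpa using this
  have h_lower : ∀ᶠ n : ℕ in atTop, G n ≤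
      ∑ Y ∈ (complexes n r).filter
        (fun Y => ∃ J : V ↪ Fin n, ∀ σ ∈ S, σ.map J ∈ Y),
        weight n r (fun i => (n : ℝ) ^ (-α i)) Y := by
    rw [eventually_atTop]
    exact ⟨2 * v + 2, fun n hn => Stmt8.main_bound r S hS hdim α hα hn⟩
  have h_upper : ∀ᶠ n : ℕ in atTop,
      (∑ Y ∈ (complexes n r).filter
        (fun Y => ∃ J : V ↪ Fin n, ∀ σ ∈ S, σ.map J ∈ Y),
        weight n r (fun i => (n : ℝ) ^ (-α i)) Y) ≤ 1 := by
    rw [eventually_atTop]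
    refine ⟨1, fun n hn => ?_⟩
    have hn1 : (1:ℝ) ≤ n := by exact_mod_cast hn
    have hn0 : (0:ℝ) < n := by linarith
    have hw_nonneg : ∀ Y : Finset (Finset (Fin n)), 0 ≤
        weight n r (fun i => (n : ℝ) ^ (-α i)) Y := by
      intro Y
      refine Finset.prod_nonneg fun i _ => mul_nonneg
        (pow_nonneg (Real.rpow_pos_of_pos hn0 _).le _) (pow_nonneg ?_ _)
      have := Real.rpow_le_one_of_one_le_of_nonpos hn1 (neg_nonpos.mpr (hα i))
      linarith
    calc ∑ Y ∈ (complexes n r).filter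
          (fun Y => ∃ J : V ↪ Fin n, ∀ σ ∈ S, σ.map J ∈ Y),
          weight n r (fun i => (n : ℝ) ^ (-α i)) Y
        ≤ ∑ Y ∈ complexes n r, weight n r (fun i => (n : ℝ) ^ (-α i)) Y :=
          Finset.sum_le_sum_of_subset_of_nonneg (Finset.filter_subset _ _)
            (fun Y _ _ => hw_nonneg Y)
      _ = 1 := Stmt8.sum_weight_one n r _
  exact tendsto_of_tendsto_of_tendsto_of_le_of_le' hGto tendsto_const_nhds h_lower h_upper
end

section
/- Let S be a finite connected abstract simplicial complex of dimension r ≥ 1 such that the degree of every i-dimensional face depends only on i; that is, for each i = 0,…,r−1 there is a number d_i with deg_S(σ) = d_i for every i-dimensional face σ of S. Then S is strictly balanced: for every nonempty proper subcomplex T ⊊ S and every i = 1,…,r one has f_0(S)·f_i(T) ≤ f_0(T)·f_i(S), and for at least one i ∈ {1,…,r} the inequality is strict (equivalently, μ_i(T) ≥ μ_i(S) for all i with at least one inequality strict). -/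
open Finset Filter

section Aux
variable {V : Type*} [DecidableEq V]

/-- Double counting: sum of degrees of `i`-faces equals `(i+2)` times number of `(i+1)`-faces. -/
lemma dcAux (T : Finset (Finset V))
    (hT : ∀ σ ∈ T, ∀ τ ⊆ σ, τ.Nonempty → τ ∈ T) (i : ℕ) :
    ∑ σ ∈ T.filter (fun σ => σ.card = i + 1), degFace T σ = (i + 2) * fS T (i + 1) := by
  classical
  have h1 : ∑ σ ∈ T.filter (fun σ => σ.card = i + 1), degFace T σ
      = ∑ σ ∈ T.filter (fun σ => σ.card = i + 1),
          ∑ τ ∈ T, (if τ.card = i + 2 ∧ σ ⊆ τ then 1 else 0) := by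
    apply Finset.sum_congr rfl
    intro σ hσ
    have hc : σ.card = i + 1 := (Finset.mem_filter.mp hσ).2
    rw [degFace, Finset.card_filter]
    apply Finset.sum_congr rfl
    intro τ _
    simp [hc]
  rw [h1, Finset.sum_comm]
  have h2 : ∀ τ ∈ T, ∑ σ ∈ T.filter (fun σ => σ.card = i + 1),
      (if τ.card = i + 2 ∧ σ ⊆ τ then 1 else 0) = if τ.card = i + 2 then i + 2 else 0 := by
    intro τ hτ
    by_cases hc : τ.card = i + 2
    · simp only [hc, true_and, if_pos]
      rw [← Finset.card_filter]
      have heq : T.filter (fun a => a.card = i + 1 ∧ a ⊆ τ)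
          = τ.powersetCard (i + 1) := by
        ext σ
        simp only [Finset.mem_filter, Finset.mem_powersetCard]
        constructor
        · rintro ⟨-, h1, h2⟩; exact ⟨h2, h1⟩
        · rintro ⟨hsub, hcard⟩
          have hne : σ.Nonempty := Finset.card_pos.mp (by omega)
          exact ⟨hT τ hτ σ hsub hne, hcard, hsub⟩
      rw [Finset.filter_filter, heq, Finset.card_powersetCard, hc]
      exact Nat.choose_succ_self_right (i + 1)
    · simp [hc]
  rw [Finset.sum_congr rfl h2, ← Finset.sum_filter, Finset.sum_const, smul_eq_mul,
    Nat.mul_comm, fS]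

lemma degMonoAux {T S : Finset (Finset V)} (hTS : T ⊆ S) (σ : Finset V) :
    degFace T σ ≤ degFace S σ :=
  Finset.card_le_card (Finset.filter_subset_filter _ hTS)

end Aux

/-- a connected `r`-dimensional complex in which the degree of every
`i`-dimensional face depends only on `i` is strictly balanced. -/
theorem stmt14 {V : Type*} [DecidableEq V] (r : ℕ) (hr : 1 ≤ r)
    (S : Finset (Finset V)) (hS : IsSimpComplex S)
    (hdim : ∀ σ ∈ S, σ.card ≤ r + 1) (hdim' : ∃ σ ∈ S, σ.card = r + 1)
    (hconn : ∀ x ∈ S.sup id, ∀ y ∈ S.sup id,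
      Relation.ReflTransGen (fun a b => ({a, b} : Finset V) ∈ S) x y)
    (d : ℕ → ℕ)
    (hreg : ∀ i, i < r → ∀ σ ∈ S, σ.card = i + 1 → degFace S σ = d i) :
    ∀ T : Finset (Finset V), T ⊆ S → T.Nonempty →
      (∀ σ ∈ T, ∀ τ ⊆ σ, τ.Nonempty → τ ∈ T) → T ≠ S →
      (∀ i, 1 ≤ i → i ≤ r → fS S 0 * fS T i ≤ fS T 0 * fS S i) ∧
      ∃ i, 1 ≤ i ∧ i ≤ r ∧ fS S 0 * fS T i < fS T 0 * fS S i := by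
  classical
  obtain ⟨hSne, hSfaces, hSclosed⟩ := hS
  intro T hTS hTne hTclosed hTneS
  -- S double counting with regularity
  have hSdc : ∀ i < r, (i + 2) * fS S (i + 1) = d i * fS S i := by
    intro i hi
    rw [← dcAux S hSclosed i]
    rw [Finset.sum_congr rfl (fun σ hσ => by
      obtain ⟨h1, h2⟩ := Finset.mem_filter.mp hσ
      exact hreg i hi σ h1 h2)]
    rw [Finset.sum_const, fS, smul_eq_mul, Nat.mul_comm]
  -- termwise degree bound in T
  have hdegle : ∀ i < r, ∀ σ ∈ T.filter (fun σ => σ.card = i + 1), degFace T σ ≤ d i := by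
    intro i hi σ hσ
    obtain ⟨h1, h2⟩ := Finset.mem_filter.mp hσ
    calc degFace T σ ≤ degFace S σ := degMonoAux hTS σ
    _ = d i := hreg i hi σ (hTS h1) h2
  have hTdc : ∀ i < r, (i + 2) * fS T (i + 1) ≤ d i * fS T i := by
    intro i hi
    rw [← dcAux T hTclosed i]
    calc ∑ σ ∈ T.filter (fun σ => σ.card = i + 1), degFace T σ
        ≤ ∑ _σ ∈ T.filter (fun σ => σ.card = i + 1), d i :=
          Finset.sum_le_sum (hdegle i hi)
    _ = d i * fS T i := by rw [Finset.sum_const, fS, smul_eq_mul, Nat.mul_comm]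
  -- nonstrict inequality for all i ≤ r
  have key : ∀ i ≤ r, fS S 0 * fS T i ≤ fS T 0 * fS S i := by
    intro i
    induction i with
    | zero => intro _; rw [Nat.mul_comm]
    | succ i ih =>
      intro hir
      have hi : i < r := by omega
      have h1 : (i + 2) * (fS S 0 * fS T (i + 1)) ≤ (i + 2) * (fS T 0 * fS S (i + 1)) := by
        calc (i + 2) * (fS S 0 * fS T (i + 1))
            = fS S 0 * ((i + 2) * fS T (i + 1)) := by ring
          _ ≤ fS S 0 * (d i * fS T i) := Nat.mul_le_mul_left _ (hTdc i hi)
          _ = d i * (fS S 0 * fS T i) := by ring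
          _ ≤ d i * (fS T 0 * fS S i) := Nat.mul_le_mul_left _ (ih (le_of_lt hi))
          _ = fS T 0 * (d i * fS S i) := by ring
          _ = fS T 0 * ((i + 2) * fS S (i + 1)) := by rw [hSdc i hi]
          _ = (i + 2) * (fS T 0 * fS S (i + 1)) := by ring
      exact Nat.le_of_mul_le_mul_left h1 (by omega)
  refine ⟨fun i h1 h2 => key i h2, ?_⟩
  -- strictness, by contradiction
  by_contra hcon
  push_neg at hcon
  have hEq : ∀ i ≤ r, fS S 0 * fS T i = fS T 0 * fS S i := by
    intro i hi
    rcases Nat.eq_zero_or_pos i with h0 | h0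
    · subst h0; rw [Nat.mul_comm]
    · exact le_antisymm (key i hi) (hcon i h0 hi)
  -- S has at least one vertex
  have hS0pos : 0 < fS S 0 := by
    obtain ⟨σ, hσS⟩ := hSne
    obtain ⟨x, hx⟩ := hSfaces σ hσS
    have hxS : {x} ∈ S := hSclosed σ hσS {x} (Finset.singleton_subset_iff.mpr hx)
      (Finset.singleton_nonempty x)
    rw [fS]
    exact Finset.card_pos.mpr ⟨{x}, Finset.mem_filter.mpr ⟨hxS, Finset.card_singleton x⟩⟩
  -- equality in T double counting, hence full degrees
  have hdegeq : ∀ i < r, ∀ σ ∈ T, σ.card = i + 1 → degFace T σ = d i := by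
    intro i hi σ hσ hcard
    have hTeq : (i + 2) * fS T (i + 1) = d i * fS T i := by
      have h1 : fS S 0 * ((i + 2) * fS T (i + 1)) = fS S 0 * (d i * fS T i) := by
        calc fS S 0 * ((i + 2) * fS T (i + 1))
            = (i + 2) * (fS S 0 * fS T (i + 1)) := by ring
          _ = (i + 2) * (fS T 0 * fS S (i + 1)) := by rw [hEq (i + 1) (by omega)]
          _ = fS T 0 * ((i + 2) * fS S (i + 1)) := by ring
          _ = fS T 0 * (d i * fS S i) := by rw [hSdc i hi]
          _ = d i * (fS T 0 * fS S i) := by ring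
          _ = d i * (fS S 0 * fS T i) := by rw [hEq i (le_of_lt hi)]
          _ = fS S 0 * (d i * fS T i) := by ring
      exact Nat.eq_of_mul_eq_mul_left hS0pos h1
    have hsumeq : ∑ σ ∈ T.filter (fun σ => σ.card = i + 1), degFace T σ
        = ∑ _σ ∈ T.filter (fun σ => σ.card = i + 1), d i := by
      rw [dcAux T hTclosed i, Finset.sum_const, smul_eq_mul, hTeq, fS, Nat.mul_comm]
    exact (Finset.sum_eq_sum_iff_of_le (hdegle i hi)).mp hsumeq σ
      (Finset.mem_filter.mpr ⟨hσ, hcard⟩)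
  -- covering: any (i+1)-face of S over an i-face of T is in T
  have hcov : ∀ i < r, ∀ σ ∈ T, σ.card = i + 1 → ∀ τ ∈ S, τ.card = i + 2 → σ ⊆ τ → τ ∈ T := by
    intro i hi σ hσ hcard τ hτ hτcard hsub
    have h1 : T.filter (fun τ => τ.card = σ.card + 1 ∧ σ ⊆ τ)
        = S.filter (fun τ => τ.card = σ.card + 1 ∧ σ ⊆ τ) := by
      apply Finset.eq_of_subset_of_card_le (Finset.filter_subset_filter _ hTS)
      have := hdegeq i hi σ hσ hcard
      have h2 := hreg i hi σ (hTS hσ) hcard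
      rw [degFace] at this; rw [degFace] at h2
      omega
    have : τ ∈ S.filter (fun τ => τ.card = σ.card + 1 ∧ σ ⊆ τ) :=
      Finset.mem_filter.mpr ⟨hτ, by omega, hsub⟩
    rw [← h1] at this
    exact (Finset.mem_filter.mp this).1
  -- T contains some vertex
  obtain ⟨σ0, hσ0⟩ := hTne
  obtain ⟨x0, hx0⟩ := hSfaces σ0 (hTS hσ0)
  have hx0T : ({x0} : Finset V) ∈ T := hTclosed σ0 hσ0 {x0}
    (Finset.singleton_subset_iff.mpr hx0) (Finset.singleton_nonempty x0)
  have hx0sup : x0 ∈ S.sup id := by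
    have : σ0 ≤ S.sup id := Finset.le_sup (f := id) (hTS hσ0)
    exact this hx0
  -- all vertices of S are in T, via connectivity
  have hvert : ∀ y, Relation.ReflTransGen (fun a b => ({a, b} : Finset V) ∈ S) x0 y →
      ({y} : Finset V) ∈ T := by
    intro y hpath
    induction hpath with
    | refl => exact hx0T
    | tail hab hbc ih =>
      rename_i b c
      have hbT : ({b} : Finset V) ∈ T := ih
      by_cases hbceq : b = c
      · rwa [← hbceq]
      · have hcard2 : ({b, c} : Finset V).card = 2 := Finset.card_pair hbceq
        have hsub : ({b} : Finset V) ⊆ {b, c} := by simp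
        have hbcT : ({b, c} : Finset V) ∈ T :=
          hcov 0 hr {b} hbT (Finset.card_singleton b) {b, c} hbc hcard2 hsub
        exact hTclosed {b, c} hbcT {c} (by simp) (Finset.singleton_nonempty c)
  -- all faces of S are in T, by strong induction on card
  have hall : ∀ n, ∀ σ ∈ S, σ.card = n → σ ∈ T := by
    intro n
    induction n using Nat.strong_induction_on with
    | _ n ih =>
      intro σ hσ hn
      match n, hn with
      | 0, hn => exact absurd (Finset.card_pos.mpr (hSfaces σ hσ)) (by omega)
      | 1, hn =>
        obtain ⟨x, hx⟩ := Finset.card_eq_one.mp hn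
        subst hx
        exact hvert x (hconn x0 hx0sup x ((Finset.le_sup (f := id) hσ)
          (Finset.mem_singleton_self x)))
      | (k + 2), hn =>
        obtain ⟨x, hx⟩ := Finset.card_pos.mp (by omega : 0 < σ.card)
        have hcard' : (σ.erase x).card = k + 1 := by rw [Finset.card_erase_of_mem hx]; omega
        have hne : (σ.erase x).Nonempty := Finset.card_pos.mp (by omega)
        have hsubS : σ.erase x ∈ S := hSclosed σ hσ (σ.erase x) (Finset.erase_subset x σ) hne
        have hsubT : σ.erase x ∈ T := ih (k + 1) (by omega) (σ.erase x) hsubS hcard'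
        have hk : k < r := by have := hdim σ hσ; omega
        exact hcov k hk (σ.erase x) hsubT hcard' σ hσ (by omega) (Finset.erase_subset x σ)
  exact hTneS (Finset.Subset.antisymm hTS (fun σ hσ => hall σ.card σ hσ rfl))
end

section
/- Let Δ^s be the full s-dimensional simplex on s+1 vertices (the complex of all nonempty subsets of a set of s+1 elements), with s ≥ 1. Then f_i(Δ^s) = C(s+1, i+1), so μ_i(Δ^s) = (s+1)/C(s+1, i+1) for 0 ≤ i ≤ s; moreover Δ^s is strictly balanced: for every nonempty proper subcomplex T ⊊ Δ^s and every i = 1,…,s one has (s+1)·f_i(T) ≤ f_0(T)·C(s+1, i+1), with strict inequality for at least one i. -/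
open Finset Filter

lemma key_le {s v i : ℕ} (hv : v ≤ s + 1) :
    (s + 1) * v.choose (i + 1) ≤ v * (s + 1).choose (i + 1) := by
  rcases Nat.eq_zero_or_pos v with h | h
  · subst h
    simp [Nat.choose_eq_zero_of_lt (Nat.succ_pos i)]
  · obtain ⟨w, rfl⟩ : ∃ w, v = w + 1 := ⟨v - 1, by omega⟩
    have h1 : (w + 1) * w.choose i = (w + 1).choose (i + 1) * (i + 1) :=
      Nat.add_one_mul_choose_eq w i
    have h2 : (s + 1) * s.choose i = (s + 1).choose (i + 1) * (i + 1) :=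
      Nat.add_one_mul_choose_eq s i
    have h3 : w.choose i ≤ s.choose i := Nat.choose_le_choose i (by omega)
    have hmul : (s + 1) * (w + 1).choose (i + 1) * (i + 1)
        ≤ (w + 1) * (s + 1).choose (i + 1) * (i + 1) := by
      calc (s + 1) * (w + 1).choose (i + 1) * (i + 1)
          = (s + 1) * ((w + 1).choose (i + 1) * (i + 1)) := by ring
        _ = (s + 1) * ((w + 1) * w.choose i) := by rw [h1]
        _ ≤ (s + 1) * ((w + 1) * s.choose i) :=
            Nat.mul_le_mul_left _ (Nat.mul_le_mul_left _ h3)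
        _ = (w + 1) * ((s + 1) * s.choose i) := by ring
        _ = (w + 1) * ((s + 1).choose (i + 1) * (i + 1)) := by rw [h2]
        _ = (w + 1) * (s + 1).choose (i + 1) * (i + 1) := by ring
    exact Nat.le_of_mul_le_mul_right hmul (Nat.succ_pos i)

lemma key_lt {s v i : ℕ} (hv1 : 1 ≤ v) (hv : v ≤ s) (hi1 : 1 ≤ i) (his : i ≤ s) :
    (s + 1) * v.choose (i + 1) < v * (s + 1).choose (i + 1) := by
  obtain ⟨w, rfl⟩ : ∃ w, v = w + 1 := ⟨v - 1, by omega⟩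
  obtain ⟨t, rfl⟩ : ∃ t, s = t + 1 := ⟨s - 1, by omega⟩
  obtain ⟨j, rfl⟩ : ∃ j, i = j + 1 := ⟨i - 1, by omega⟩
  have h1 : (w + 1) * w.choose (j + 1) = (w + 1).choose (j + 2) * (j + 2) :=
    Nat.add_one_mul_choose_eq w (j + 1)
  have h2 : (t + 2) * (t + 1).choose (j + 1) = (t + 2).choose (j + 2) * (j + 2) :=
    Nat.add_one_mul_choose_eq (t + 1) (j + 1)
  have h3 : w.choose (j + 1) < (t + 1).choose (j + 1) := by
    have hle : w.choose (j + 1) ≤ t.choose (j + 1) := Nat.choose_le_choose _ (by omega)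
    have hpos : 0 < t.choose j := Nat.choose_pos (by omega)
    have : (t + 1).choose (j + 1) = t.choose j + t.choose (j + 1) :=
      Nat.choose_succ_succ t j
    omega
  have hmul : (t + 2) * (w + 1).choose (j + 2) * (j + 2)
      < (w + 1) * (t + 2).choose (j + 2) * (j + 2) := by
    calc (t + 2) * (w + 1).choose (j + 2) * (j + 2)
        = (t + 2) * ((w + 1).choose (j + 2) * (j + 2)) := by ring
      _ = (t + 2) * ((w + 1) * w.choose (j + 1)) := by rw [h1]
      _ < (t + 2) * ((w + 1) * (t + 1).choose (j + 1)) := by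
          have h4 : (w + 1) * w.choose (j + 1) < (w + 1) * (t + 1).choose (j + 1) :=
            (Nat.mul_lt_mul_left (show 0 < w + 1 by omega)).mpr h3
          exact (Nat.mul_lt_mul_left (show 0 < t + 2 by omega)).mpr h4
      _ = (w + 1) * ((t + 2) * (t + 1).choose (j + 1)) := by ring
      _ = (w + 1) * ((t + 2).choose (j + 2) * (j + 2)) := by rw [h2]
      _ = (w + 1) * (t + 2).choose (j + 2) * (j + 2) := by ring
  have := Nat.lt_of_mul_lt_mul_right hmul
  simpa using this

/-- the full `s`-simplex (all nonempty subsets of an `(s+1)`-element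
vertex set) has `f_i = C(s+1, i+1)` and is strictly balanced. -/
theorem stmt15 {V : Type*} [DecidableEq V] [Fintype V] (s : ℕ) (hs : 1 ≤ s)
    (hV : Fintype.card V = s + 1) :
    (∀ i : ℕ, fS ((univ : Finset (Finset V)).filter (fun σ => σ.Nonempty)) i
        = (s + 1).choose (i + 1)) ∧
    ∀ T : Finset (Finset V),
      T ⊆ (univ : Finset (Finset V)).filter (fun σ => σ.Nonempty) → T.Nonempty →
      (∀ σ ∈ T, ∀ τ ⊆ σ, τ.Nonempty → τ ∈ T) →
      T ≠ (univ : Finset (Finset V)).filter (fun σ => σ.Nonempty) →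
      (∀ i, 1 ≤ i → i ≤ s → (s + 1) * fS T i ≤ fS T 0 * (s + 1).choose (i + 1)) ∧
      ∃ i, 1 ≤ i ∧ i ≤ s ∧ (s + 1) * fS T i < fS T 0 * (s + 1).choose (i + 1) := by
  constructor
  · intro i
    unfold fS
    have hset : (((univ : Finset (Finset V)).filter (fun σ => σ.Nonempty)).filter
        fun σ => σ.card = i + 1) = (univ : Finset V).powersetCard (i + 1) := by
      ext σ
      simp only [Finset.mem_filter, Finset.mem_univ, true_and, Finset.mem_powersetCard,
        Finset.subset_univ]
      constructor
      · rintro ⟨-, h⟩; exact h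
      · intro h
        exact ⟨Finset.card_pos.mp (by omega), h⟩
    rw [hset, Finset.card_powersetCard, Finset.card_univ, hV]
  · intro T hTsub hTne hTcl hTneq
    set U : Finset V := (univ : Finset V).filter (fun x => ({x} : Finset V) ∈ T) with hU
    have hf0 : fS T 0 = U.card := by
      unfold fS
      rw [eq_comm]
      apply Finset.card_bij (fun x _ => ({x} : Finset V))
      · intro a ha
        simp only [hU, Finset.mem_filter, Finset.mem_univ, true_and] at ha
        simp [ha]
      · intro a _ b _ h
        exact Finset.singleton_injective h
      · intro σ hσ
        simp only [Finset.mem_filter] at hσ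
        obtain ⟨hσT, hc⟩ := hσ
        obtain ⟨a, rfl⟩ := Finset.card_eq_one.mp hc
        refine ⟨a, ?_, rfl⟩
        simp [hU, hσT]
    have hsubU : ∀ σ ∈ T, σ ⊆ U := by
      intro σ hσ x hx
      simp only [hU, Finset.mem_filter, Finset.mem_univ, true_and]
      exact hTcl σ hσ {x} (Finset.singleton_subset_iff.mpr hx) ⟨x, Finset.mem_singleton_self x⟩
    have hfi : ∀ i : ℕ, fS T i ≤ U.card.choose (i + 1) := by
      intro i
      unfold fS
      calc (T.filter fun σ => σ.card = i + 1).card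
          ≤ (U.powersetCard (i + 1)).card := by
            apply Finset.card_le_card
            intro σ hσ
            simp only [Finset.mem_filter] at hσ
            exact Finset.mem_powersetCard.mpr ⟨hsubU σ hσ.1, hσ.2⟩
        _ = U.card.choose (i + 1) := Finset.card_powersetCard _ _
    have hUle : U.card ≤ s + 1 := by
      calc U.card ≤ Fintype.card V := Finset.card_le_univ U
        _ = s + 1 := hV
    have hU1 : 1 ≤ U.card := by
      obtain ⟨σ, hσ⟩ := hTne
      have hne : σ.Nonempty := by
        have := hTsub hσ
        simp only [Finset.mem_filter] at this
        exact this.2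
      obtain ⟨x, hx⟩ := hne
      have : x ∈ U := hsubU σ hσ hx
      exact Finset.card_pos.mpr ⟨x, this⟩
    refine ⟨?_, ?_⟩
    · intro i _ _
      calc (s + 1) * fS T i ≤ (s + 1) * U.card.choose (i + 1) :=
            Nat.mul_le_mul_left _ (hfi i)
        _ ≤ U.card * (s + 1).choose (i + 1) := key_le hUle
        _ = fS T 0 * (s + 1).choose (i + 1) := by rw [hf0]
    · by_cases hUall : U.card = s + 1
      · -- all vertices present; some face of card ≥ 2 missing
        have hUuniv : U = (univ : Finset V) := Finset.eq_univ_of_card U (by rw [hUall, hV])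
        have hssub : T ⊂ (univ : Finset (Finset V)).filter (fun σ => σ.Nonempty) :=
          lt_of_le_of_ne hTsub hTneq
        obtain ⟨σ, hσfull, hσT⟩ := Finset.exists_of_ssubset hssub
        simp only [Finset.mem_filter, Finset.mem_univ, true_and] at hσfull
        have hc2 : 2 ≤ σ.card := by
          by_contra h
          have hc1 : σ.card = 1 := by
            have := Finset.card_pos.mpr hσfull
            omega
          obtain ⟨a, rfl⟩ := Finset.card_eq_one.mp hc1
          have : a ∈ U := hUuniv ▸ Finset.mem_univ a
          simp only [hU, Finset.mem_filter, Finset.mem_univ, true_and] at this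
          exact hσT this
        have hcle : σ.card ≤ s + 1 := by
          calc σ.card ≤ Fintype.card V := Finset.card_le_univ σ
            _ = s + 1 := hV
        refine ⟨σ.card - 1, by omega, by omega, ?_⟩
        have hci : σ.card = (σ.card - 1) + 1 := by omega
        have hlt : fS T (σ.card - 1) < (s + 1).choose (σ.card - 1 + 1) := by
          unfold fS
          have hsub' : (T.filter fun τ => τ.card = σ.card - 1 + 1)
              ⊆ (univ : Finset V).powersetCard (σ.card - 1 + 1) := by
            intro τ hτ
            simp only [Finset.mem_filter] at hτ
            exact Finset.mem_powersetCard.mpr ⟨Finset.subset_univ _, hτ.2⟩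
          have hmem : σ ∈ (univ : Finset V).powersetCard (σ.card - 1 + 1) :=
            Finset.mem_powersetCard.mpr ⟨Finset.subset_univ _, by omega⟩
          have hnot : σ ∉ (T.filter fun τ => τ.card = σ.card - 1 + 1) := by
            simp [hσT]
          calc (T.filter fun τ => τ.card = σ.card - 1 + 1).card
              < ((univ : Finset V).powersetCard (σ.card - 1 + 1)).card :=
                Finset.card_lt_card ((Finset.ssubset_iff_of_subset hsub').mpr ⟨σ, hmem, hnot⟩)
            _ = (s + 1).choose (σ.card - 1 + 1) := by
                rw [Finset.card_powersetCard, Finset.card_univ, hV]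
        calc (s + 1) * fS T (σ.card - 1)
            < (s + 1) * (s + 1).choose (σ.card - 1 + 1) :=
              (Nat.mul_lt_mul_left (by omega : 0 < s + 1)).mpr hlt
          _ = fS T 0 * (s + 1).choose (σ.card - 1 + 1) := by rw [hf0, hUall]
      · -- missing a vertex: strict at i = 1
        have hUs : U.card ≤ s := by omega
        refine ⟨1, le_refl 1, hs, ?_⟩
        calc (s + 1) * fS T 1 ≤ (s + 1) * U.card.choose 2 :=
              Nat.mul_le_mul_left _ (hfi 1)
          _ < U.card * (s + 1).choose 2 := key_lt hU1 hUs (le_refl 1) hs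
          _ = fS T 0 * (s + 1).choose 2 := by rw [hf0]
end
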